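/- arXiv:2505.07101 — 9 statements merged into one kernel-verified Lean document; each statement's English description precedes it below -/
import Mathlib

section
/- Fix an integer t ≥ 2 and δ_t ∈ (0, 1/e²). Let (H_i)_{i≥0} be a filtration on a probability space, let F be a finite index set, and for each f ∈ F and each i ∈ {1,…,t−1} let Y_{f,i} be an H_i-measurable random variable with values in [0,1]. Then with probability at least 1 − log₂(t−1)·δ_t, simultaneously for all f ∈ F: Σ_{i=1}^{t−1} E[Y_{f,i} | H_{i−1}] ≤ 68·log(|F|/δ_t) + 2·Σ_{i=1}^{t−1} Y_{f,i}. -/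
/-!
For a single `f`, `exp (∑_{i ≤ k} (E[Y_i | ℋ_{i-1}] / 2 - log 2 · Y_i))` is a supermartingale,
because `2^{-y} ≤ 1 - y/2` on `[0, 1]` and `1 - x ≤ e^{-x}`. Its expectation is at most `1`, so by
Markov's inequality `∑ E[Y_i | ℋ_{i-1}] > 2a + 2 ∑ Y_i` has probability at most `e^{-a}`. With
`a = 34 log (|F| / δ)` this is at most `δ / |F|`, and a union bound over `F` gives failure
probability `δ ≤ log₂ (t - 1) δ` once `t ≥ 3`. For `t = 2` the sum is a single conditional
expectation, at most `1 ≤ 68 log (|F| / δ)`.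
-/

open MeasureTheory ProbabilityTheory Real

lemma exp_neg_log_two_mul_le_one_sub_half {y : ℝ} (h0 : 0 ≤ y) (h1 : y ≤ 1) :
    exp (-(log 2 * y)) ≤ 1 - y / 2 := by
  have hchord := convexOn_exp.2 (Set.mem_univ (-log 2)) (Set.mem_univ 0) h0 (sub_nonneg.2 h1)
    (add_sub_cancel y 1)
  have hhalf : exp (-log 2) = 1 / 2 := by rw [exp_neg, exp_log two_pos, one_div]
  simp only [smul_eq_mul, mul_zero, add_zero, exp_zero, mul_one, hhalf] at hchord
  calc exp (-(log 2 * y)) = exp (y * -log 2) := by ring_nf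
    _ ≤ y * (1 / 2) + (1 - y) := hchord
    _ = 1 - y / 2 := by ring

section ConditionalExpectation

variable {Ω : Type*} {m m0 : MeasurableSpace Ω} {μ : Measure Ω} [IsFiniteMeasure μ] {Y : Ω → ℝ}

lemma condExp_mem_Icc (hm : m ≤ m0) (hY : Integrable Y μ) {a b : ℝ}
    (hYab : ∀ ω, Y ω ∈ Set.Icc a b) : ∀ᵐ ω ∂μ, μ[Y | m] ω ∈ Set.Icc a b := by
  have ha := condExp_mono (m := m) (integrable_const a) hY (ae_of_all _ fun ω => (hYab ω).1)
  have hb := condExp_mono (m := m) hY (integrable_const b) (ae_of_all _ fun ω => (hYab ω).2)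
  rw [condExp_const hm] at ha hb
  filter_upwards [ha, hb] with ω ha hb using ⟨ha, hb⟩

lemma integrable_exp_neg_log_two_mul (hY : AEMeasurable Y μ) (hY0 : ∀ ω, 0 ≤ Y ω) :
    Integrable (fun ω => exp (-(log 2 * Y ω))) μ :=
  .of_mem_Icc 0 1 (by fun_prop) <| ae_of_all _ fun ω =>
    ⟨(exp_pos _).le, exp_le_one_iff.2 (by nlinarith [hY0 ω, log_nonneg one_le_two])⟩

lemma condExp_exp_neg_log_two_mul_le (hm : m ≤ m0) (hY : AEStronglyMeasurable Y μ)
    (hY01 : ∀ ω, Y ω ∈ Set.Icc (0 : ℝ) 1) :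
    μ[fun ω => exp (-(log 2 * Y ω)) | m] ≤ᵐ[μ] fun ω => exp (-(μ[Y | m] ω / 2)) := by
  have hYint : Integrable Y μ := .of_mem_Icc 0 1 hY.aemeasurable (ae_of_all _ hY01)
  have hchord : μ[fun ω => exp (-(log 2 * Y ω)) | m] ≤ᵐ[μ] μ[fun ω => 1 - Y ω / 2 | m] :=
    condExp_mono (integrable_exp_neg_log_two_mul hY.aemeasurable fun ω => (hY01 ω).1)
      ((integrable_const 1).sub (hYint.div_const 2)) <| ae_of_all _ fun ω =>
        exp_neg_log_two_mul_le_one_sub_half (hY01 ω).1 (hY01 ω).2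
  have hlin : μ[fun ω => 1 - Y ω / 2 | m] =ᵐ[μ] fun ω => 1 - μ[Y | m] ω / 2 := by
    have hfun : (fun ω => 1 - Y ω / 2) = (fun _ => (1 : ℝ)) - (2⁻¹ : ℝ) • Y := by
      ext ω; simp [div_eq_inv_mul]
    rw [hfun]
    filter_upwards [condExp_sub (m := m) (integrable_const 1) (hYint.smul (2⁻¹ : ℝ)),
      condExp_smul (m := m) (2⁻¹ : ℝ) Y] with ω hsub hhalf
    simp [hsub, hhalf, condExp_const hm, div_eq_inv_mul]
  filter_upwards [hchord, hlin] with ω hchord hlin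
  linarith [add_one_le_exp (-(μ[Y | m] ω / 2))]

end ConditionalExpectation

section ExpSupermartingale

variable {Ω : Type*} {m0 : MeasurableSpace Ω} {μ : Measure Ω} {ℋ : Filtration ℕ m0}
  {Y : ℕ → Ω → ℝ}

noncomputable def compensatedSum (μ : Measure Ω) (ℋ : Filtration ℕ m0) (Y : ℕ → Ω → ℝ) (k : ℕ)
    (ω : Ω) : ℝ :=
  ∑ i ∈ Finset.Icc 1 k, (μ[Y i | ℋ (i - 1)] ω / 2 - log 2 * Y i ω)

lemma compensatedSum_eq (k : ℕ) (ω : Ω) :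
    compensatedSum μ ℋ Y k ω =
      (∑ i ∈ Finset.Icc 1 k, μ[Y i | ℋ (i - 1)] ω) / 2 - log 2 * ∑ i ∈ Finset.Icc 1 k, Y i ω := by
  rw [compensatedSum, Finset.sum_sub_distrib, Finset.sum_div, Finset.mul_sum]

lemma compensatedSum_succ (k : ℕ) (ω : Ω) :
    compensatedSum μ ℋ Y (k + 1) ω =
      compensatedSum μ ℋ Y k ω + (μ[Y (k + 1) | ℋ k] ω / 2 - log 2 * Y (k + 1) ω) :=
  Finset.sum_Icc_succ_top (Nat.le_add_left 1 k) _

lemma stronglyAdapted_compensatedSum (hY : StronglyAdapted ℋ Y) :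
    StronglyAdapted ℋ (compensatedSum μ ℋ Y) := fun k =>
  (Finset.measurable_fun_sum _ fun i hi =>
    ((stronglyMeasurable_condExp.mono (ℋ.mono (by grind))).measurable.div_const 2).sub
      (((hY i).mono (ℋ.mono (Finset.mem_Icc.1 hi).2)).measurable.const_mul _)).stronglyMeasurable

variable [IsFiniteMeasure μ]

lemma ae_sum_condExp_le_card (hY : StronglyAdapted ℋ Y)
    (hY01 : ∀ i ω, Y i ω ∈ Set.Icc (0 : ℝ) 1) (s : Finset ℕ) :
    ∀ᵐ ω ∂μ, ∑ i ∈ s, μ[Y i | ℋ (i - 1)] ω ≤ s.card := by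
  have hc01 : ∀ᵐ ω ∂μ, ∀ i, μ[Y i | ℋ (i - 1)] ω ∈ Set.Icc (0 : ℝ) 1 :=
    ae_all_iff.2 fun i => condExp_mem_Icc (ℋ.le _)
      (.of_mem_Icc 0 1 ((hY i).mono (ℋ.le i)).measurable.aemeasurable (ae_of_all _ (hY01 i)))
      (hY01 i)
  filter_upwards [hc01] with ω hc01
  simpa using Finset.sum_le_card_nsmul s _ 1 fun i _ => (hc01 i).2

lemma ae_forall_sum_condExp_le_of_card_le {F : Type*} [Countable F] {Y : F → ℕ → Ω → ℝ}
    (hY : ∀ f, StronglyAdapted ℋ (Y f))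
    (hY01 : ∀ f i ω, Y f i ω ∈ Set.Icc (0 : ℝ) 1) {s : Finset ℕ} {b : ℝ} (hs : (s.card : ℝ) ≤ b) :
    ∀ᵐ ω ∂μ, ∀ f, ∑ i ∈ s, μ[Y f i | ℋ (i - 1)] ω ≤ b + 2 * ∑ i ∈ s, Y f i ω := by
  filter_upwards [ae_all_iff.2 fun f => ae_sum_condExp_le_card (hY f) (hY01 f) s] with ω hω f
  linarith [hω f, Finset.sum_nonneg fun i (_ : i ∈ s) => (hY01 f i ω).1]

lemma integrable_exp_compensatedSum (hY : StronglyAdapted ℋ Y)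
    (hY01 : ∀ i ω, Y i ω ∈ Set.Icc (0 : ℝ) 1) (k : ℕ) :
    Integrable (fun ω => exp (compensatedSum μ ℋ Y k ω)) μ := by
  refine .of_mem_Icc 0 (exp (k / 2))
    ((stronglyAdapted_compensatedSum hY k).mono (ℋ.le k)).measurable.exp.aemeasurable ?_
  filter_upwards [ae_sum_condExp_le_card hY hY01 (Finset.Icc 1 k)] with ω hω
  have hYsum : 0 ≤ ∑ i ∈ Finset.Icc 1 k, Y i ω := Finset.sum_nonneg fun i _ => (hY01 i ω).1
  simp only [Nat.card_Icc, add_tsub_cancel_right] at hω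
  refine ⟨(exp_pos _).le, exp_le_exp.2 ?_⟩
  rw [compensatedSum_eq]
  nlinarith [log_nonneg one_le_two]

lemma condExp_exp_compensatedSum_succ_le (hY : StronglyAdapted ℋ Y)
    (hY01 : ∀ i ω, Y i ω ∈ Set.Icc (0 : ℝ) 1) (k : ℕ) :
    μ[fun ω => exp (compensatedSum μ ℋ Y (k + 1) ω) | ℋ k]
      ≤ᵐ[μ] fun ω => exp (compensatedSum μ ℋ Y k ω) := by
  set W : Ω → ℝ := fun ω => exp (compensatedSum μ ℋ Y k ω + μ[Y (k + 1) | ℋ k] ω / 2)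
  set g : Ω → ℝ := fun ω => exp (-(log 2 * Y (k + 1) ω))
  have hWg : (fun ω => exp (compensatedSum μ ℋ Y (k + 1) ω)) = W * g := by
    ext ω
    simp only [Pi.mul_apply, W, g, ← exp_add, compensatedSum_succ]
    ring_nf
  have hW : StronglyMeasurable[ℋ k] W :=
    (((stronglyAdapted_compensatedSum hY k).measurable.add
      (stronglyMeasurable_condExp.measurable.div_const 2)).exp).stronglyMeasurable
  have hYk : AEStronglyMeasurable (Y (k + 1)) μ :=
    ((hY (k + 1)).mono (ℋ.le _)).aestronglyMeasurable
  have hg : Integrable g μ :=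
    integrable_exp_neg_log_two_mul hYk.aemeasurable fun ω => (hY01 (k + 1) ω).1
  have hpull : μ[W * g | ℋ k] =ᵐ[μ] W * μ[g | ℋ k] :=
    condExp_mul_of_stronglyMeasurable_left hW (hWg ▸ integrable_exp_compensatedSum hY hY01 _) hg
  rw [hWg]
  filter_upwards [hpull, condExp_exp_neg_log_two_mul_le (ℋ.le k) hYk (hY01 (k + 1))]
    with ω hpull hg
  calc μ[W * g | ℋ k] ω = W ω * μ[g | ℋ k] ω := hpull
    _ ≤ W ω * exp (-(μ[Y (k + 1) | ℋ k] ω / 2)) := by gcongr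
    _ = exp (compensatedSum μ ℋ Y k ω) := by rw [← exp_add]; ring_nf

lemma supermartingale_exp_compensatedSum (hY : StronglyAdapted ℋ Y)
    (hY01 : ∀ i ω, Y i ω ∈ Set.Icc (0 : ℝ) 1) :
    Supermartingale (fun k ω => exp (compensatedSum μ ℋ Y k ω)) ℋ μ :=
  supermartingale_nat (fun k => continuous_exp.comp_stronglyMeasurable
      (stronglyAdapted_compensatedSum hY k))
    (integrable_exp_compensatedSum hY hY01) (condExp_exp_compensatedSum_succ_le hY hY01)

end ExpSupermartingale

lemma two_le_log_div {c δ : ℝ} (hc : 1 ≤ c) (hδ0 : 0 < δ) (hδ : δ < 1 / exp 2) :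
    2 ≤ log (c / δ) := by
  rw [lt_div_iff₀ (exp_pos 2)] at hδ
  rw [← log_exp 2]
  exact log_le_log (exp_pos 2) (by rw [le_div_iff₀ hδ0]; linarith)

lemma one_le_logb_two_sub_one {t : ℕ} (ht : 2 < t) : 1 ≤ logb 2 ((t : ℝ) - 1) := by
  have ht' : (3 : ℝ) ≤ t := mod_cast ht
  rw [le_logb_iff_rpow_le one_lt_two (by linarith)]
  norm_num
  linarith

section Concentration

variable {Ω : Type*} {m0 : MeasurableSpace Ω} {μ : Measure Ω} [IsProbabilityMeasure μ]
  {ℋ : Filtration ℕ m0} {Y : ℕ → Ω → ℝ}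

lemma integral_exp_compensatedSum_le_one (hY : StronglyAdapted ℋ Y)
    (hY01 : ∀ i ω, Y i ω ∈ Set.Icc (0 : ℝ) 1) (n : ℕ) :
    ∫ ω, exp (compensatedSum μ ℋ Y n ω) ∂μ ≤ 1 := by
  simpa [compensatedSum] using
    (supermartingale_exp_compensatedSum (μ := μ) hY hY01).setIntegral_le (Nat.zero_le n)
      MeasurableSet.univ

lemma measureReal_sum_condExp_gt_le (hY : StronglyAdapted ℋ Y)
    (hY01 : ∀ i ω, Y i ω ∈ Set.Icc (0 : ℝ) 1) (n : ℕ) (a : ℝ) :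
    μ.real {ω | 2 * a + 2 * ∑ i ∈ Finset.Icc 1 n, Y i ω <
      ∑ i ∈ Finset.Icc 1 n, μ[Y i | ℋ (i - 1)] ω} ≤ exp (-a) := by
  have hsub : {ω | 2 * a + 2 * ∑ i ∈ Finset.Icc 1 n, Y i ω <
      ∑ i ∈ Finset.Icc 1 n, μ[Y i | ℋ (i - 1)] ω} ⊆ {ω | a ≤ compensatedSum μ ℋ Y n ω} := by
    intro ω hω
    have hYsum : 0 ≤ ∑ i ∈ Finset.Icc 1 n, Y i ω := Finset.sum_nonneg fun i _ => (hY01 i ω).1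
    simp only [Set.mem_ofPred_eq, compensatedSum_eq] at hω ⊢
    nlinarith [log_two_lt_d9]
  calc _ ≤ μ.real {ω | a ≤ compensatedSum μ ℋ Y n ω} := measureReal_mono hsub
    _ ≤ exp (-1 * a) * mgf (compensatedSum μ ℋ Y n) μ 1 :=
      measure_ge_le_exp_mul_mgf a zero_le_one
        (by simpa using integrable_exp_compensatedSum hY hY01 n)
    _ ≤ exp (-a) := by
      rw [neg_one_mul, mgf]
      simpa using mul_le_of_le_one_right (exp_pos _).le
        (integral_exp_compensatedSum_le_one hY hY01 n)

lemma measureReal_exists_sum_condExp_gt_le {F : Type*} [Fintype F] {Y : F → ℕ → Ω → ℝ}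
    (hY : ∀ f, StronglyAdapted ℋ (Y f))
    (hY01 : ∀ f i ω, Y f i ω ∈ Set.Icc (0 : ℝ) 1) (n : ℕ) (a : ℝ) :
    μ.real {ω | ∃ f, 2 * a + 2 * ∑ i ∈ Finset.Icc 1 n, Y f i ω <
      ∑ i ∈ Finset.Icc 1 n, μ[Y f i | ℋ (i - 1)] ω} ≤ Fintype.card F * exp (-a) := by
  calc _ = μ.real (⋃ f, {ω | 2 * a + 2 * ∑ i ∈ Finset.Icc 1 n, Y f i ω <
        ∑ i ∈ Finset.Icc 1 n, μ[Y f i | ℋ (i - 1)] ω}) := by rw [Set.ofPred_exists]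
    _ ≤ ∑ f, μ.real {ω | 2 * a + 2 * ∑ i ∈ Finset.Icc 1 n, Y f i ω <
        ∑ i ∈ Finset.Icc 1 n, μ[Y f i | ℋ (i - 1)] ω} := measureReal_iUnion_fintype_le _
    _ ≤ ∑ _f : F, exp (-a) :=
      Finset.sum_le_sum fun f _ => measureReal_sum_condExp_gt_le (hY f) (hY01 f) n a
    _ = Fintype.card F * exp (-a) := by simp

lemma ofReal_one_sub_le_measure {s : Set Ω} {b : ℝ} (h : μ.real sᶜ ≤ b) :
    ENNReal.ofReal (1 - b) ≤ μ s :=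
  calc ENNReal.ofReal (1 - b) ≤ ENNReal.ofReal (1 - μ.real sᶜ) :=
        ENNReal.ofReal_le_ofReal (by linarith)
    _ = 1 - μ sᶜ := by
        rw [ENNReal.ofReal_sub _ measureReal_nonneg, ENNReal.ofReal_one, ofReal_measureReal]
    _ ≤ μ s := tsub_le_iff_right.2 (measure_univ (μ := μ) ▸ measure_univ_le_add_compl s)

end Concentration

/-- Fix an integer `t ≥ 2` and `δₜ ∈ (0, 1/e²)`. Let `(H i)` be a filtration
on a probability space, `F` a finite index set, and for each `f : F` and `i ∈ {1,…,t−1}` let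
`Y f i` be an `H i`-measurable random variable with values in `[0,1]`. Then with probability at
least `1 − log₂(t−1)·δₜ`, simultaneously for all `f : F`:
`∑_{i=1}^{t−1} E[Y f i | H (i−1)] ≤ 68·log(|F|/δₜ) + 2·∑_{i=1}^{t−1} Y f i`. -/
theorem stmt0 {Ω : Type*} {m0 : MeasurableSpace Ω} (μ : Measure Ω) [IsProbabilityMeasure μ]
    (ℋ : Filtration ℕ m0) {F : Type*} [Fintype F] [Nonempty F]
    (t : ℕ) (ht : 2 ≤ t) (δt : ℝ) (hδt : δt ∈ Set.Ioo (0 : ℝ) (1 / Real.exp 2))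
    (Y : F → ℕ → Ω → ℝ)
    (hYmeas : ∀ f i, StronglyMeasurable[ℋ i] (Y f i))
    (hYbdd : ∀ f i ω, Y f i ω ∈ Set.Icc (0 : ℝ) 1) :
    ENNReal.ofReal (1 - Real.logb 2 ((t : ℝ) - 1) * δt) ≤
      μ {ω | ∀ f : F,
        ∑ i ∈ Finset.Icc 1 (t - 1), (μ[Y f i | ℋ (i - 1)]) ω ≤
          68 * Real.log ((Fintype.card F : ℝ) / δt)
            + 2 * ∑ i ∈ Finset.Icc 1 (t - 1), Y f i ω} := by
  obtain ⟨hδ0, hδe⟩ := hδt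
  set L := log ((Fintype.card F : ℝ) / δt)
  have hL : 2 ≤ L := two_le_log_div (mod_cast Fintype.card_pos) hδ0 hδe
  refine ofReal_one_sub_le_measure ?_
  rcases ht.eq_or_lt with rfl | ht3
  · have hgood := ae_forall_sum_condExp_le_of_card_le (μ := μ) hYmeas hYbdd
      (s := Finset.Icc 1 (2 - 1)) (b := 68 * L) (by norm_num; linarith)
    rw [(measureReal_eq_zero_iff (μ := μ)).2 (mem_ae_iff.1 hgood)]
    norm_num
  calc _ ≤ μ.real {ω | ∃ f, 2 * (34 * L) + 2 * ∑ i ∈ Finset.Icc 1 (t - 1), Y f i ω <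
        ∑ i ∈ Finset.Icc 1 (t - 1), μ[Y f i | ℋ (i - 1)] ω} :=
      measureReal_mono fun ω hω => by
        simp only [Set.mem_compl_iff, Set.mem_ofPred_eq, not_forall, not_le] at hω ⊢
        obtain ⟨f, hf⟩ := hω
        exact ⟨f, by linarith⟩
    _ ≤ Fintype.card F * exp (-(34 * L)) :=
      measureReal_exists_sum_condExp_gt_le hYmeas hYbdd _ _
    _ ≤ Fintype.card F * exp (-L) := by gcongr; linarith
    _ = δt := by rw [exp_neg, exp_log (by positivity), inv_div]; field_simp
    _ ≤ logb 2 ((t : ℝ) - 1) * δt := le_mul_of_one_le_left hδ0.le (one_le_logb_two_sub_one ht3)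
end

section
/- Let A be a finite set of size K and let (a_t)_{t=1}^T be a sequence in A, with T > K, such that the first K terms a_1,…,a_K enumerate all K elements of A (each element appears exactly once among the first K rounds). Then Σ_{t=K+1}^{T} 1 / (Σ_{j=1}^{t−1} 𝟙{a_t = a_j}) ≤ K + K·log(T/K). -/
/-!
Group the rounds `t > K` by the value `x = a t`. Besides its own earlier repeats after round `K`,
every such `t` also sees the occurrence of `x` among the first `K` rounds, so if `x` recurs `n_x`
times after round `K` its terms contribute at most the harmonic number `H_{n_x} ≤ 1 + log n_x`.
Since `∑ₓ (n_x + 1) = T`, concavity of `log` gives `∑ₓ log (n_x + 1) ≤ K log (T / K)`.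
-/

open Finset

theorem Finset.sum_card_filter_lt {α M : Type*} [LinearOrder α] [AddCommMonoid M]
    (s : Finset α) (f : ℕ → M) :
    ∑ t ∈ s, f #{j ∈ s | j < t} = ∑ i ∈ range #s, f i := by
  classical
  induction s using Finset.induction_on_max with
  | empty => simp
  | insert m s hlt ih =>
    have hm : m ∉ s := fun h => lt_irrefl m (hlt m h)
    have hrank_m : {j ∈ insert m s | j < m} = s := by
      rw [filter_insert, if_neg (lt_irrefl m), filter_true_of_mem hlt]
    have hrank : ∀ t ∈ s, {j ∈ insert m s | j < t} = {j ∈ s | j < t} := fun t ht => by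
      rw [filter_insert, if_neg (not_lt.2 (hlt t ht).le)]
    rw [sum_insert hm, hrank_m, sum_congr rfl fun t ht => congrArg f (congrArg card (hrank t ht)),
      ih, card_insert_of_notMem hm, sum_range_succ, add_comm]

theorem Finset.sum_one_div_card_filter_lt_le {α : Type*} [LinearOrder α] (s : Finset α) :
    ∑ t ∈ s, (1 : ℝ) / (#{j ∈ s | j < t} + 1) ≤ 1 + Real.log #s := by
  rw [sum_card_filter_lt s fun i => (1 : ℝ) / (i + 1)]
  simpa [harmonic, one_div] using harmonic_le_one_add_log #s

theorem Real.log_le_log_add_one {x : ℝ} (hx : 0 ≤ x) : Real.log x ≤ Real.log (x + 1) := by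
  rcases hx.eq_or_lt with rfl | hpos
  · simp
  · exact Real.log_le_log hpos (by linarith)

theorem Real.sum_log_le_card_mul_log_mean {ι : Type*} {s : Finset ι} (hs : s.Nonempty)
    {p : ι → ℝ} (hp : ∀ i ∈ s, 0 < p i) :
    ∑ i ∈ s, Real.log (p i) ≤ #s * Real.log ((∑ i ∈ s, p i) / #s) := by
  have hcard : (0 : ℝ) < #s := by exact_mod_cast hs.card_pos
  have hjensen := strictConcaveOn_log_Ioi.concaveOn.le_map_sum (t := s)
    (w := fun _ => (#s : ℝ)⁻¹) (p := p) (fun _ _ => by positivity)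
    (by simp [hcard.ne']) hp
  simp only [smul_eq_mul, ← mul_sum] at hjensen
  rw [inv_mul_eq_div, inv_mul_eq_div, div_le_iff₀ hcard] at hjensen
  linarith

section Enumeration

variable {A : Type*} (a : ℕ → A) {K T : ℕ}

theorem exists_mem_Icc_eq_of_injOn [Fintype A] (hK : Fintype.card A = K)
    (henum : Set.InjOn a (Set.Icc 1 K)) (x : A) : ∃ j ∈ Icc 1 K, a j = x := by
  have hsurj := surjOn_of_injOn_of_card_le (s := Icc 1 K) (t := univ) a
    (fun _ _ => mem_coe.2 (mem_univ _)) (by rwa [coe_Icc]) (by simp [hK])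
  simpa using hsurj (mem_univ x)

variable [DecidableEq A]

theorem card_filter_lt_add_one_le_card_filter {t j₀ : ℕ} (hj₀ : j₀ ∈ Icc 1 K)
    (ha : a j₀ = a t) (ht : K < t) :
    #{j ∈ {j ∈ Icc (K + 1) T | a j = a t} | j < t} + 1 ≤
      #{j ∈ Icc 1 (t - 1) | a t = a j} := by
  have hj₀_notMem : j₀ ∉ {j ∈ {j ∈ Icc (K + 1) T | a j = a t} | j < t} := by
    simp only [mem_filter, mem_Icc] at hj₀ ⊢; omega
  rw [← card_insert_of_notMem hj₀_notMem]
  refine card_le_card fun j hj => ?_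
  simp only [mem_insert, mem_filter, mem_Icc] at hj hj₀ ⊢
  grind

theorem one_div_count_le_one_div_card_filter_lt_add_one {t j₀ : ℕ} (hj₀ : j₀ ∈ Icc 1 K)
    (ha : a j₀ = a t) (ht : K < t) :
    (1 : ℝ) / (∑ j ∈ Icc 1 (t - 1), if a t = a j then (1 : ℝ) else 0) ≤
      1 / (#{j ∈ {j ∈ Icc (K + 1) T | a j = a t} | j < t} + 1) := by
  rw [sum_boole]
  gcongr
  exact_mod_cast card_filter_lt_add_one_le_card_filter a hj₀ ha ht

theorem sum_card_fiber_add_one [Fintype A] (hK : Fintype.card A = K) (hKT : K ≤ T) :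
    ∑ x : A, ((#{t ∈ Icc (K + 1) T | a t = x} : ℝ) + 1) = T := by
  have hfib := card_eq_sum_card_fiberwise (s := Icc (K + 1) T) (t := univ) (f := a)
    (fun _ _ => mem_univ _)
  rw [Nat.card_Icc] at hfib
  rw [sum_add_distrib, ← Nat.cast_sum, ← hfib, sum_const, card_univ, hK]
  push_cast [hKT]
  ring

end Enumeration

/-- Let `A` be a finite set of size `K` and `(a_t)_{t=1}^T` a sequence in `A`
with `T > K`, whose first `K` terms enumerate all `K` elements of `A` (each element appears
exactly once among the first `K` rounds, i.e. `a` is injective on `{1,…,K}` and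
`|A| = K`). Then `∑_{t=K+1}^{T} 1 / (∑_{j=1}^{t−1} 𝟙{a_t = a_j}) ≤ K + K·log(T/K)`. -/
theorem stmt2 {A : Type*} [Fintype A] [DecidableEq A] (K T : ℕ)
    (hK : Fintype.card A = K) (hT : K < T) (a : ℕ → A)
    (henum : Set.InjOn a (Set.Icc 1 K)) :
    ∑ t ∈ Finset.Icc (K + 1) T,
        (1 : ℝ) / (∑ j ∈ Finset.Icc 1 (t - 1), if a t = a j then (1 : ℝ) else 0) ≤
      (K : ℝ) + (K : ℝ) * Real.log ((T : ℝ) / (K : ℝ)) := by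
  set S := Icc (K + 1) T
  have hA : (univ : Finset A).Nonempty := univ_nonempty_iff.2 ⟨a 0⟩
  calc ∑ t ∈ S, (1 : ℝ) / (∑ j ∈ Icc 1 (t - 1), if a t = a j then (1 : ℝ) else 0)
      ≤ ∑ t ∈ S, (1 : ℝ) / (#{j ∈ {j ∈ S | a j = a t} | j < t} + 1) := by
        refine sum_le_sum fun t ht => ?_
        obtain ⟨j₀, hj₀, ha⟩ := exists_mem_Icc_eq_of_injOn a hK henum (a t)
        exact one_div_count_le_one_div_card_filter_lt_add_one a hj₀ ha (by simp [S] at ht; omega)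
    _ = ∑ x : A, ∑ t ∈ {t ∈ S | a t = x},
          (1 : ℝ) / (#{j ∈ {j ∈ S | a j = x} | j < t} + 1) := by
        rw [← sum_fiberwise S a]
        refine sum_congr rfl fun x _ => sum_congr rfl fun t ht => ?_
        rw [(mem_filter.1 ht).2]
    _ ≤ ∑ x : A, (1 + Real.log ((#{t ∈ S | a t = x} : ℝ) + 1)) := by
        exact sum_le_sum fun x _ => (sum_one_div_card_filter_lt_le _).trans
          (add_le_add_right (Real.log_le_log_add_one (Nat.cast_nonneg _)) 1)
    _ ≤ K + K * Real.log (T / K) := by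
        rw [sum_add_distrib, sum_const, card_univ, hK, nsmul_one]
        have hjensen := Real.sum_log_le_card_mul_log_mean hA
          (p := fun x => (#{t ∈ S | a t = x} : ℝ) + 1) (fun _ _ => by positivity)
        rw [sum_card_fiber_add_one a hK hT.le, card_univ, hK] at hjensen
        linarith
end

section
/- Consider a sequential interaction over rounds i = 1, 2, …: contexts x_i are drawn i.i.d. from a distribution Q on a context space X; the action set A is finite with |A| = K; for i ≤ K the learner deterministically plays the i-th action of A regardless of the context, and for i > K the learner chooses a stochastic policy π_i(·|·) : X → Δ(A) measurably with respect to the history H_{i−1} = σ((x_j, a_j, y_j)_{j<i}) and plays a_i ∼ π_i(·|x_i). Let F be a finite set containing an element f*, let u : F × X × A → [0,1], and for each t let f̂^t be an H_{t−1}-measurable element of F. Suppose there are constants L > 0 and nonnegative numbers (E_t)_t such that on an event of probability at least 1 − δ/2 one has, for all t, Σ_{i=1}^{t−1} (u(f̂^t, x_i, a_i) − u(f*, x_i, a_i))² ≤ 2 L² E_t. Then with probability at least 1 − δ, simultaneously for all t > K and all stochastic policies π : X → Δ(A): |E[u(f̂^t, x, a) − u(f*, x, a)]| ≤ √( E[ 1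 / Σ_{i=1}^{t−1} 𝟙{a = ã_i} ] ) · √( 68·log(2|F|t³/δ) + 4 L² E_t ), where both expectations are taken over a fresh context x ∼ Q, a fresh action a ∼ π(·|x), and independent counterfactual actions ã_i ∼ π_i(·|x) for i = 1,…,t−1 (with ã_i equal to the deterministically explored action for i ≤ K). -/
/-!
Fix a model `f` and write `D = u f − u f*`, `Z_i = D(x_i, a_i)²` and
`G_i = E_{x∼Q, a∼π_i(·|x)}[D²]`, which is known at time `i − 1`. Since
`e^{−z} ≤ 1 − z/2 ≤ e^{−z/2}` on `[0, 1]`, the process `exp (∑_{i ≤ s} (G_i / 2 − Z_i))` is a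
supermartingale, so by Markov's inequality and a union bound over `f ∈ F` and `t ≥ 2`, with
probability at least `1 − δ/2` every `f` and `t` satisfy
`∑_{i < t} G_i ≤ 2 log (2|F|t³/δ) + 2 ∑_{i < t} Z_i`. For `f = f̂^t` on the oracle event the
right-hand side is at most `68 log (2|F|t³/δ) + 4L²E_t`.

For the deviation itself, let `N(a)` be the number of counterfactual actions `ã_i` equal to `a`.
The first `K` rounds explore every action, so `N ≥ 1`, and Cauchy–Schwarz for
`D = N^{-1/2} · N^{1/2} D` gives `|E D| ≤ √(E[1/N]) · √(E[N D²])`, where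
`E[N D²] ≤ ∑_{i < t} E[D(ã_i)²] = ∑_{i < t} G_i`.
-/

open MeasureTheory ProbabilityTheory Function

theorem abs_le_one_of_mem_Icc {x : ℝ} (hx : x ∈ Set.Icc (0 : ℝ) 1) : |x| ≤ 1 :=
  abs_le.2 ⟨by linarith [hx.1], hx.2⟩

theorem sq_mem_Icc_zero_one {x : ℝ} (hx : |x| ≤ 1) : x ^ 2 ∈ Set.Icc (0 : ℝ) 1 :=
  ⟨sq_nonneg x, (sq_le_one_iff_abs_le_one x).2 hx⟩

theorem abs_exp_neg_le_one {z : ℝ} (hz : 0 ≤ z) : |Real.exp (-z)| ≤ 1 := by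
  rw [abs_of_pos (Real.exp_pos _), Real.exp_le_one_iff, neg_nonpos]
  exact hz

theorem exp_neg_le_one_sub_half {z : ℝ} (hz : z ∈ Set.Icc (0 : ℝ) 1) :
    Real.exp (-z) ≤ 1 - z / 2 := by
  have hconv := convexOn_exp.2 (Set.mem_univ 0) (Set.mem_univ (-1)) (sub_nonneg.2 hz.2) hz.1
    (sub_add_cancel 1 z)
  simp only [smul_eq_mul, mul_zero, zero_add, Real.exp_zero, mul_one, mul_neg] at hconv
  nlinarith [Real.exp_neg_one_lt_half, hz.1]

theorem norm_exp_sum_Icc_le {y : ℕ → ℝ} {C : ℝ} (hy : ∀ i, y i ≤ C) (s : ℕ) :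
    ‖Real.exp (∑ i ∈ Finset.Icc 1 s, y i)‖ ≤ Real.exp (s * C) := by
  rw [Real.norm_of_nonneg (Real.exp_nonneg _), Real.exp_le_exp]
  simpa using Finset.sum_le_card_nsmul (Finset.Icc 1 s) _ _ fun i _ => hy i

theorem sum_range_one_div_add_two_pow_three_le_one (n : ℕ) :
    ∑ t ∈ Finset.range n, 1 / ((t : ℝ) + 2) ^ 3 ≤ 1 := by
  calc ∑ t ∈ Finset.range n, 1 / ((t : ℝ) + 2) ^ 3
      ≤ ∑ t ∈ Finset.range n, (((t + 2 : ℕ) : ℝ) ^ 2)⁻¹ := Finset.sum_le_sum fun t _ => by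
        rw [one_div]; push_cast
        exact inv_anti₀ (by positivity)
          (pow_le_pow_right₀ (by linarith [t.cast_nonneg (α := ℝ)]) (by norm_num))
    _ = ∑ i ∈ Finset.Ioo 1 (n + 2), ((i : ℝ) ^ 2)⁻¹ := by
        rw [Finset.range_eq_Ico, Finset.sum_Ico_add' (fun i : ℕ => ((i : ℝ) ^ 2)⁻¹)]; rfl
    _ ≤ 2 / (1 + 1) := by exact_mod_cast sum_Ioo_inv_sq_le 1 (n + 2)
    _ = 1 := by norm_num

theorem sum_fin_add_one_eq_sum_Icc {M : Type*} [AddCommMonoid M] (f : ℕ → M) (n : ℕ) :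
    ∑ i : Fin n, f (i + 1) = ∑ i ∈ Finset.Icc 1 n, f i := by
  rw [Fin.sum_univ_eq_sum_range (fun i => f (i + 1)), Finset.range_eq_Ico, Finset.sum_Ico_add']
  rfl

section CauchySchwarz

variable {α : Type*} {mα : MeasurableSpace α} {μ : Measure α}

theorem abs_integral_le_of_forall_abs_le [IsProbabilityMeasure μ] {f : α → ℝ} {C : ℝ}
    (hf : ∀ a, |f a| ≤ C) : |∫ a, f a ∂μ| ≤ C := by
  simpa using norm_integral_le_of_norm_le_const (μ := μ) (f := f) (C := C) (ae_of_all μ hf)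

theorem memLp_two_sqrt {f : α → ℝ} (hf : Integrable f μ) (hf0 : 0 ≤ᵐ[μ] f) :
    MemLp (fun x => √(f x)) 2 μ := by
  rw [memLp_two_iff_integrable_sq hf.aestronglyMeasurable.aemeasurable.sqrt.aestronglyMeasurable]
  exact hf.congr (hf0.mono fun x hx => (Real.sq_sqrt hx).symm)

theorem integral_sqrt_mul_sqrt_le {f g : α → ℝ} (hf : Integrable f μ) (hg : Integrable g μ)
    (hf0 : 0 ≤ᵐ[μ] f) (hg0 : 0 ≤ᵐ[μ] g) :
    ∫ x, √(f x) * √(g x) ∂μ ≤ √(∫ x, f x ∂μ) * √(∫ x, g x ∂μ) := by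
  have h := integral_mul_le_Lp_mul_Lq_of_nonneg Real.HolderConjugate.two_two
    (ae_of_all μ fun x => Real.sqrt_nonneg (f x)) (ae_of_all μ fun x => Real.sqrt_nonneg (g x))
    (by simpa using memLp_two_sqrt hf hf0) (by simpa using memLp_two_sqrt hg hg0)
  have hsq : ∀ {h : α → ℝ}, 0 ≤ᵐ[μ] h → ∫ x, √(h x) ^ (2 : ℝ) ∂μ = ∫ x, h x ∂μ := fun hh0 =>
    integral_congr_ae (hh0.mono fun x hx => by simp [Real.sq_sqrt hx])
  rwa [hsq hf0, hsq hg0, ← Real.sqrt_eq_rpow, ← Real.sqrt_eq_rpow] at h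

theorem abs_integral_le_sqrt_mul_sqrt {h f g : α → ℝ} (hf : Integrable f μ) (hg : Integrable g μ)
    (hf0 : 0 ≤ᵐ[μ] f) (hg0 : 0 ≤ᵐ[μ] g) (hh : ∀ᵐ x ∂μ, |h x| ≤ √(f x) * √(g x)) :
    |∫ x, h x ∂μ| ≤ √(∫ x, f x ∂μ) * √(∫ x, g x ∂μ) :=
  calc |∫ x, h x ∂μ| ≤ ∫ x, |h x| ∂μ := abs_integral_le_integral_abs
  _ ≤ ∫ x, √(f x) * √(g x) ∂μ :=
    integral_mono_of_nonneg (ae_of_all μ fun x => abs_nonneg (h x))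
      ((memLp_two_sqrt hf hf0).integrable_mul (memLp_two_sqrt hg hg0)) hh
  _ ≤ √(∫ x, f x ∂μ) * √(∫ x, g x ∂μ) := integral_sqrt_mul_sqrt_le hf hg hf0 hg0

end CauchySchwarz

theorem integral_integral_mem_Icc {X A : Type*} [MeasurableSpace X] [MeasurableSpace A]
    (Q : Measure X) [IsProbabilityMeasure Q] (κ : X → Measure A)
    [∀ x, IsProbabilityMeasure (κ x)] {g : X → A → ℝ} (hg01 : ∀ x a, g x a ∈ Set.Icc (0 : ℝ) 1) :
    ∫ x, ∫ a, g x a ∂κ x ∂Q ∈ Set.Icc (0 : ℝ) 1 :=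
  ⟨integral_nonneg fun x => integral_nonneg fun a => (hg01 x a).1,
    (le_abs_self _).trans <| abs_integral_le_of_forall_abs_le fun x =>
      abs_integral_le_of_forall_abs_le fun a => abs_le_one_of_mem_Icc (hg01 x a)⟩

section FiniteIntegrals

variable {X α : Type*} {mX : MeasurableSpace X} [MeasurableSpace α] [MeasurableSingletonClass α]

theorem measurable_integral_of_fintype [Fintype α] {κ : X → Measure α}
    [∀ x, IsFiniteMeasure (κ x)] (hκ : Measurable κ) {g : X → α → ℝ}
    (hg : ∀ a, Measurable fun x => g x a) :
    Measurable fun x => ∫ a, g x a ∂κ x := by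
  simp_rw [fun x => integral_fintype (μ := κ x) (f := g x) .of_finite]
  exact Finset.measurable_sum _ fun a _ =>
    ((Measure.measurable_coe (measurableSet_singleton a)).comp hκ).ennreal_toReal.smul (hg a)

theorem measurable_measure_pi {ι : Type*} [Fintype ι] [Countable α] {κ : ι → X → Measure α}
    [∀ i x, SigmaFinite (κ i x)] (hκ : ∀ i, Measurable (κ i)) :
    Measurable fun x => Measure.pi fun i => κ i x := by
  refine Measure.measurable_of_measurable_coe _ fun s hs => ?_
  simp_rw [← Measure.tsum_indicator_apply_singleton _ s hs]
  refine Measurable.tsum fun cf => ?_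
  by_cases hcf : cf ∈ s
  · simp only [Set.indicator_of_mem hcf]
    simp_rw [← Set.univ_pi_singleton cf, Measure.pi_pi]
    exact Finset.measurable_prod _ fun i _ =>
      (Measure.measurable_coe (measurableSet_singleton _)).comp (hκ i)
  · simp [Set.indicator_of_notMem hcf]

theorem stronglyMeasurable_integral_integral_of_fintype [Fintype α] {Ω : Type*}
    {m : MeasurableSpace Ω} (Q : Measure X) [SFinite Q] {κ : Ω → X → Measure α}
    [∀ ω x, IsFiniteMeasure (κ ω x)] (hκ : Measurable[m.prod mX] (uncurry κ)) {g : X → α → ℝ}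
    (hg : ∀ a, Measurable fun x => g x a) :
    StronglyMeasurable[m] fun ω => ∫ x, ∫ a, g x a ∂κ ω x ∂Q :=
  (measurable_integral_of_fintype (mX := m.prod mX) (κ := fun p : Ω × X => κ p.1 p.2) hκ
    fun a => (hg a).comp measurable_snd).stronglyMeasurable.integral_prod_right'

theorem integrable_integral_of_fintype [Fintype α] (Q : Measure X) [IsFiniteMeasure Q]
    {κ : X → Measure α} [∀ x, IsProbabilityMeasure (κ x)] (hκ : Measurable κ) {g : X → α → ℝ}
    (hg : ∀ a, Measurable fun x => g x a) {C : ℝ} (hgC : ∀ x a, |g x a| ≤ C) :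
    Integrable (fun x => ∫ a, g x a ∂κ x) Q :=
  .of_bound (measurable_integral_of_fintype hκ hg).aestronglyMeasurable C <| ae_of_all _ fun x =>
    abs_integral_le_of_forall_abs_le (hgC x)

end FiniteIntegrals

theorem ae_surjective_pi {ι α : Type*} [Fintype ι] [Countable α] [MeasurableSpace α]
    [MeasurableSingletonClass α] {κ : ι → Measure α} [∀ i, SigmaFinite (κ i)]
    (hκ : ∀ a, ∃ i, κ i = Measure.dirac a) : ∀ᵐ cf ∂Measure.pi κ, Surjective cf := by
  refine ae_all_iff.2 fun a => ?_
  obtain ⟨i, hi⟩ := hκ a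
  have : ∀ᵐ b ∂κ i, b = a := by rw [hi, ae_dirac_eq]; exact Filter.eventually_pure.2 rfl
  exact (Measure.tendsto_eval_ae_ae.eventually this).mono fun cf hcf => ⟨i, hcf⟩

section VisitCount

variable {A : Type*} [DecidableEq A] {n : ℕ}

def visitCount (cf : Fin n → A) (a : A) : ℝ := ∑ i, if a = cf i then 1 else 0

theorem visitCount_eq_card (cf : Fin n → A) (a : A) :
    visitCount cf a = (Finset.univ.filter fun i => a = cf i).card := by
  simp [visitCount, Finset.sum_boole]

theorem visitCount_pos {cf : Fin n → A} (hcf : Surjective cf) (a : A) : 0 < visitCount cf a := by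
  obtain ⟨i, rfl⟩ := hcf a
  rw [visitCount_eq_card, Nat.cast_pos, Finset.card_pos]
  exact ⟨i, by simp⟩

theorem one_div_visitCount_mem_Icc (cf : Fin n → A) (a : A) :
    1 / visitCount cf a ∈ Set.Icc (0 : ℝ) 1 := by
  rw [visitCount_eq_card, one_div]
  exact ⟨by positivity, Nat.cast_inv_le_one _⟩

theorem visitCount_mul_sq_le (cf : Fin n → A) (g : A → ℝ) (a : A) :
    visitCount cf a * g a ^ 2 ≤ ∑ i, g (cf i) ^ 2 := by
  rw [visitCount, Finset.sum_mul]
  refine Finset.sum_le_sum fun i _ => ?_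
  split_ifs with h
  · rw [h, one_mul]
  · rw [zero_mul]; positivity

variable [Fintype A] [MeasurableSpace A] [MeasurableSingletonClass A]

theorem abs_integral_le_sqrt_inv_visitCount_mul_sqrt_sum (ν : Measure A) [IsProbabilityMeasure ν]
    (κ : Fin n → Measure A) [∀ i, IsProbabilityMeasure (κ i)]
    (hκ : ∀ᵐ cf ∂Measure.pi κ, Surjective cf) (g : A → ℝ) :
    |∫ a, g a ∂ν| ≤ √(∫ a, ∫ cf, 1 / visitCount cf a ∂Measure.pi κ ∂ν) *
      √(∑ i, ∫ a, g a ^ 2 ∂κ i) := by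
  set P := Measure.pi κ
  have hcount : ∫ p, visitCount p.2 p.1 * g p.1 ^ 2 ∂ν.prod P ≤ ∑ i, ∫ a, g a ^ 2 ∂κ i :=
    calc ∫ p, visitCount p.2 p.1 * g p.1 ^ 2 ∂ν.prod P
        ≤ ∫ p, ∑ i, g (p.2 i) ^ 2 ∂ν.prod P :=
          integral_mono .of_finite .of_finite fun p => visitCount_mul_sq_le p.2 g p.1
      _ = ∑ i, ∫ a, g a ^ 2 ∂κ i := by
          rw [integral_fun_snd (f := fun cf : Fin n → A => ∑ i, g (cf i) ^ 2),
            integral_finsetSum _ fun i _ => .of_finite]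
          simp only [probReal_univ, one_smul, P]
          exact Finset.sum_congr rfl fun i _ => integral_comp_eval (X := fun _ => A)
            (f := fun a => g a ^ 2) (Integrable.of_finite (μ := κ i)).1
  have hsurj : ∀ᵐ p ∂ν.prod P, 0 < visitCount p.2 p.1 :=
    Measure.quasiMeasurePreserving_snd.ae (hκ.mono fun cf hcf => visitCount_pos hcf) |>.mono
      fun p hp => hp p.1
  have hCS := abs_integral_le_sqrt_mul_sqrt (μ := ν.prod P) (h := fun p => g p.1)
    (f := fun p => 1 / visitCount p.2 p.1) (g := fun p => visitCount p.2 p.1 * g p.1 ^ 2)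
    .of_finite .of_finite
    (ae_of_all _ fun p => (one_div_visitCount_mem_Icc p.2 p.1).1)
    (hsurj.mono fun p hp => by positivity)
    (hsurj.mono fun p hp => by
      rw [← Real.sqrt_mul (one_div_nonneg.2 hp.le), ← mul_assoc, one_div_mul_cancel hp.ne',
        one_mul, Real.sqrt_sq_eq_abs])
  rw [integral_fun_fst, integral_prod _ .of_finite] at hCS
  simp only [probReal_univ, one_smul] at hCS
  exact hCS.trans (by gcongr)

theorem abs_integral_integral_le_sqrt_inv_visitCount_mul_sqrt_sum {X : Type*} [MeasurableSpace X]
    (Q : Measure X) [IsProbabilityMeasure Q] {ν : X → Measure A}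
    [∀ x, IsProbabilityMeasure (ν x)] (hν : Measurable ν) {κ : Fin n → X → Measure A}
    [∀ i x, IsProbabilityMeasure (κ i x)] (hκ : ∀ i, Measurable (κ i))
    (hsurj : ∀ x, ∀ᵐ cf ∂Measure.pi (fun i => κ i x), Surjective cf) {g : X → A → ℝ}
    (hg : ∀ a, Measurable fun x => g x a) {C : ℝ} (hgC : ∀ x a, |g x a| ≤ C) :
    |∫ x, ∫ a, g x a ∂ν x ∂Q| ≤
      √(∫ x, ∫ a, ∫ cf, 1 / visitCount cf a ∂Measure.pi (fun i => κ i x) ∂ν x ∂Q) *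
        √(∑ i, ∫ x, ∫ a, g x a ^ 2 ∂κ i x ∂Q) := by
  have hT : ∀ i, Integrable (fun x => ∫ a, g x a ^ 2 ∂κ i x) Q := fun i =>
    integrable_integral_of_fintype Q (hκ i) (fun a => (hg a).pow_const 2) (C := C ^ 2)
      fun x a => by rw [abs_sq]; exact sq_le_sq' (abs_le.1 (hgC x a)).1 (abs_le.1 (hgC x a)).2
  have hS := integrable_integral_of_fintype Q hν (C := 1)
    (g := fun x a => ∫ cf, 1 / visitCount cf a ∂Measure.pi (fun i => κ i x))
    (fun a => measurable_integral_of_fintype (measurable_measure_pi hκ) fun _ => measurable_const)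
    fun x a => abs_integral_le_of_forall_abs_le fun cf =>
      abs_le_one_of_mem_Icc (one_div_visitCount_mem_Icc cf a)
  rw [← integral_finsetSum _ fun i _ => hT i]
  refine abs_integral_le_sqrt_mul_sqrt hS (integrable_finsetSum _ fun i _ => hT i)
    (ae_of_all _ fun x => integral_nonneg fun a => integral_nonneg fun cf =>
      (one_div_visitCount_mem_Icc cf a).1)
    (ae_of_all _ fun x => Finset.sum_nonneg fun i _ => integral_nonneg fun a => sq_nonneg _)
    (ae_of_all _ fun x => abs_integral_le_sqrt_inv_visitCount_mul_sqrt_sum _ _ (hsurj x) _)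

end VisitCount

section ExponentialSupermartingale

variable {Ω : Type*} {mΩ : MeasurableSpace Ω} {μ : Measure Ω} [IsProbabilityMeasure μ]

theorem integral_exp_sum_Icc_le_one (ℋ : Filtration ℕ mΩ) {Y : ℕ → Ω → ℝ} {C : ℝ}
    (hY : ∀ i, Measurable[ℋ i] (Y i)) (hYC : ∀ i ω, Y i ω ≤ C)
    (hcond : ∀ i, μ[fun ω => Real.exp (Y (i + 1) ω) | ℋ i] ≤ᵐ[μ] 1) (s : ℕ) :
    ∫ ω, Real.exp (∑ i ∈ Finset.Icc 1 s, Y i ω) ∂μ ≤ 1 := by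
  induction s with
  | zero => simp
  | succ s ih =>
    set M := fun ω => Real.exp (∑ i ∈ Finset.Icc 1 s, Y i ω)
    have hMmeas : Measurable[ℋ s] M := (Finset.measurable_sum _ fun i hi =>
      (hY i).mono (ℋ.mono (Finset.mem_Icc.1 hi).2) le_rfl).exp
    have hMbound : ∀ ω, ‖M ω‖ ≤ Real.exp (s * C) := fun ω =>
      norm_exp_sum_Icc_le (fun i => hYC i ω) s
    have hM : Integrable M μ := .of_bound (hMmeas.mono (ℋ.le s) le_rfl).aestronglyMeasurable _
      (ae_of_all μ hMbound)
    have hexpY : Integrable (fun ω => Real.exp (Y (s + 1) ω)) μ :=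
      .of_bound ((hY (s + 1)).mono (ℋ.le _) le_rfl).exp.aestronglyMeasurable (Real.exp C)
        (ae_of_all μ fun ω => by
          rw [Real.norm_of_nonneg (Real.exp_nonneg _), Real.exp_le_exp]; exact hYC _ ω)
    calc ∫ ω, Real.exp (∑ i ∈ Finset.Icc 1 (s + 1), Y i ω) ∂μ
        = ∫ ω, (M * fun ω => Real.exp (Y (s + 1) ω)) ω ∂μ := by
          simp_rw [Finset.sum_Icc_succ_top (by omega : 1 ≤ s + 1), Real.exp_add]; rfl
      _ = ∫ ω, (M * μ[fun ω => Real.exp (Y (s + 1) ω) | ℋ s]) ω ∂μ := by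
          rw [← integral_condExp (ℋ.le s)]
          exact integral_congr_ae (condExp_stronglyMeasurable_mul_of_bound (ℋ.le s)
            hMmeas.stronglyMeasurable hexpY _ (ae_of_all μ hMbound))
      _ ≤ ∫ ω, M ω ∂μ := by
          refine integral_mono_ae (integrable_condExp.bdd_mul hM.aestronglyMeasurable
            (ae_of_all μ hMbound)) hM ((hcond s).mono fun ω hω => ?_)
          exact mul_le_of_le_one_right (Real.exp_nonneg _) hω
      _ ≤ 1 := ih

theorem measure_sum_Icc_ge_le_exp_neg (ℋ : Filtration ℕ mΩ) {Y : ℕ → Ω → ℝ} {C : ℝ}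
    (hY : ∀ i, Measurable[ℋ i] (Y i)) (hYC : ∀ i ω, Y i ω ≤ C)
    (hcond : ∀ i, μ[fun ω => Real.exp (Y (i + 1) ω) | ℋ i] ≤ᵐ[μ] 1) (s : ℕ) (θ : ℝ) :
    μ {ω | θ ≤ ∑ i ∈ Finset.Icc 1 s, Y i ω} ≤ ENNReal.ofReal (Real.exp (-θ)) := by
  have hMmeas : Measurable fun ω => Real.exp (∑ i ∈ Finset.Icc 1 s, Y i ω) :=
    (Finset.measurable_sum _ fun i _ => (hY i).mono (ℋ.le i) le_rfl).exp
  have hMarkov := mul_meas_ge_le_integral_of_nonneg (μ := μ)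
    (ae_of_all μ fun ω => Real.exp_nonneg _)
    (Integrable.of_bound hMmeas.aestronglyMeasurable _
      (ae_of_all μ fun ω => norm_exp_sum_Icc_le (fun i => hYC i ω) s)) (Real.exp θ)
  simp_rw [Real.exp_le_exp] at hMarkov
  rw [← ofReal_measureReal]
  refine ENNReal.ofReal_le_ofReal ?_
  rw [Real.exp_neg, ← one_div, le_div_iff₀' (Real.exp_pos θ)]
  exact hMarkov.trans (integral_exp_sum_Icc_le_one ℋ hY hYC hcond s)

end ExponentialSupermartingale

section OneStep

variable {X A : Type*} [MeasurableSpace X] [MeasurableSpace A] [Fintype A]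
  [MeasurableSingletonClass A]

theorem integral_integral_exp_neg_le_one_sub_half (Q : Measure X) [IsProbabilityMeasure Q]
    {κ : X → Measure A} [∀ x, IsProbabilityMeasure (κ x)] (hκ : Measurable κ) {g : X → A → ℝ}
    (hg : ∀ a, Measurable fun x => g x a) (hg01 : ∀ x a, g x a ∈ Set.Icc (0 : ℝ) 1) :
    ∫ x, ∫ a, Real.exp (-g x a) ∂κ x ∂Q ≤ 1 - (∫ x, ∫ a, g x a ∂κ x ∂Q) / 2 := by
  have hint := integrable_integral_of_fintype Q hκ hg fun x a => abs_le_one_of_mem_Icc (hg01 x a)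
  have hint_exp := integrable_integral_of_fintype Q hκ (g := fun x a => Real.exp (-g x a))
    (fun a => (hg a).neg.exp) fun x a => abs_exp_neg_le_one (hg01 x a).1
  calc ∫ x, ∫ a, Real.exp (-g x a) ∂κ x ∂Q
      ≤ ∫ x, (1 - (∫ a, g x a ∂κ x) / 2) ∂Q :=
        integral_mono hint_exp ((integrable_const 1).sub (hint.div_const 2)) fun x =>
          calc ∫ a, Real.exp (-g x a) ∂κ x
              ≤ ∫ a, (1 - g x a / 2) ∂κ x := integral_mono .of_finite .of_finite fun a =>
                exp_neg_le_one_sub_half (hg01 x a)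
            _ = 1 - (∫ a, g x a ∂κ x) / 2 := by
                rw [integral_sub .of_finite .of_finite, integral_div]; simp
    _ = 1 - (∫ x, ∫ a, g x a ∂κ x ∂Q) / 2 := by
        rw [integral_sub (integrable_const 1) (hint.div_const 2), integral_div]; simp

theorem condExp_exp_half_integral_sub_le_one {Ω : Type*} {m mΩ : MeasurableSpace Ω}
    {μ : Measure Ω} [IsFiniteMeasure μ] (hm : m ≤ mΩ) (Q : Measure X)
    [IsProbabilityMeasure Q] {κ : Ω → X → Measure A} [∀ ω x, IsProbabilityMeasure (κ ω x)]
    (hκ : Measurable[m.prod inferInstance] (uncurry κ)) {g : X → A → ℝ}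
    (hg : Measurable (uncurry g)) (hg01 : ∀ x a, g x a ∈ Set.Icc (0 : ℝ) 1) {ξ : Ω → X}
    {ζ : Ω → A} (hξ : Measurable ξ) (hζ : Measurable ζ)
    (hplay : μ[fun ω => Real.exp (-g (ξ ω) (ζ ω)) | m]
      =ᵐ[μ] fun ω => ∫ x, ∫ a, Real.exp (-g x a) ∂κ ω x ∂Q) :
    μ[fun ω => Real.exp ((∫ x, ∫ a, g x a ∂κ ω x ∂Q) / 2 - g (ξ ω) (ζ ω)) | m] ≤ᵐ[μ] 1 := by
  set G := fun ω => ∫ x, ∫ a, g x a ∂κ ω x ∂Q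
  have hsect : ∀ a, Measurable fun x => g x a := fun a =>
    hg.comp (measurable_id.prodMk measurable_const)
  have hG : Measurable[m] G :=
    (stronglyMeasurable_integral_integral_of_fintype Q hκ hsect).measurable
  have hG1 : ∀ ω, G ω ≤ 1 := fun ω => (integral_integral_mem_Icc Q (κ ω) hg01).2
  have hint : Integrable (fun ω => Real.exp (-g (ξ ω) (ζ ω))) μ :=
    .of_bound (hg.comp (hξ.prodMk hζ)).neg.exp.aestronglyMeasurable 1
      (ae_of_all μ fun ω => abs_exp_neg_le_one (hg01 _ _).1)
  have hsplit : (fun ω => Real.exp (G ω / 2 - g (ξ ω) (ζ ω)))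
      = (fun ω => Real.exp (G ω / 2)) * fun ω => Real.exp (-g (ξ ω) (ζ ω)) := by
    ext ω; simp [sub_eq_add_neg, Real.exp_add]
  rw [hsplit]
  filter_upwards [condExp_stronglyMeasurable_mul_of_bound hm (hG.div_const 2).exp.stronglyMeasurable
    hint (Real.exp (1 / 2)) (ae_of_all μ fun ω => by
      rw [Real.norm_of_nonneg (Real.exp_nonneg _), Real.exp_le_exp]; linarith [hG1 ω]),
    hplay] with ω hpull hω
  rw [hpull, Pi.mul_apply, hω, Pi.one_apply]
  calc Real.exp (G ω / 2) * ∫ x, ∫ a, Real.exp (-g x a) ∂κ ω x ∂Q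
      ≤ Real.exp (G ω / 2) * Real.exp (-(G ω / 2)) := by
        gcongr
        exact (integral_integral_exp_neg_le_one_sub_half Q (κ := κ ω)
          (hκ.comp (@measurable_prodMk_left _ _ m _ ω)) hsect hg01).trans
          (by linarith [Real.add_one_le_exp (-(G ω / 2))])
    _ = 1 := by rw [← Real.exp_add, add_neg_cancel, Real.exp_zero]

end OneStep

section UnionBound

variable {Ω : Type*} {mΩ : MeasurableSpace Ω} (μ : Measure Ω)

theorem measure_iUnion_iUnion_le_of_le_div_card_mul_cube {F : Type*} [Fintype F]
    {s : ℕ → F → Set Ω} {ε : ℝ} (hε : 0 ≤ ε)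
    (hs : ∀ t f, μ (s t f) ≤ ENNReal.ofReal (ε / (Fintype.card F * ((t : ℝ) + 2) ^ 3))) :
    μ (⋃ t, ⋃ f, s t f) ≤ ENNReal.ofReal ε := by
  have hunion : ∀ t, μ (⋃ f, s t f) ≤ ENNReal.ofReal (ε * (1 / ((t : ℝ) + 2) ^ 3)) := fun t =>
    calc μ (⋃ f, s t f) ≤ ∑ f, μ (s t f) := measure_iUnion_fintype_le μ _
      _ ≤ Fintype.card F • ENNReal.ofReal (ε / (Fintype.card F * ((t : ℝ) + 2) ^ 3)) :=
          Finset.sum_le_card_nsmul _ _ _ fun f _ => hs t f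
      _ = ENNReal.ofReal (Fintype.card F * (ε / (Fintype.card F * ((t : ℝ) + 2) ^ 3))) := by
          rw [nsmul_eq_mul, ← ENNReal.ofReal_natCast, ← ENNReal.ofReal_mul (by positivity)]
      _ ≤ ENNReal.ofReal (ε * (1 / ((t : ℝ) + 2) ^ 3)) := by
          refine ENNReal.ofReal_le_ofReal ?_
          rcases (Fintype.card F).eq_zero_or_pos with hF | hF
          · simp only [hF, Nat.cast_zero, zero_mul]; positivity
          · rw [← mul_div_assoc, mul_div_mul_left _ _ (by positivity), mul_one_div]
  calc μ (⋃ t, ⋃ f, s t f) ≤ ∑' t, μ (⋃ f, s t f) := measure_iUnion_le _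
    _ ≤ ENNReal.ofReal ε := ENNReal.tsum_le_of_sum_range_le fun n => by
        refine (Finset.sum_le_sum fun t _ => hunion t).trans ?_
        rw [← ENNReal.ofReal_sum_of_nonneg fun t _ => by positivity, ← Finset.mul_sum]
        exact ENNReal.ofReal_le_ofReal
          (mul_le_of_le_one_right hε (sum_range_one_div_add_two_pow_three_le_one n))

variable {μ} in
theorem ofReal_sub_le_measure_of_diff_subset {E B S : Set Ω} {a b : ℝ}
    (hE : ENNReal.ofReal a ≤ μ E) (hB : μ B ≤ ENNReal.ofReal b) (hb : 0 ≤ b)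
    (hsub : E \ B ⊆ S) : ENNReal.ofReal (a - b) ≤ μ S :=
  calc ENNReal.ofReal (a - b) = ENNReal.ofReal a - ENNReal.ofReal b := ENNReal.ofReal_sub a hb
    _ ≤ μ E - μ B := tsub_le_tsub hE hB
    _ ≤ μ (E \ B) := le_measure_sdiff
    _ ≤ μ S := measure_mono hsub

end UnionBound

section Bandit

variable {Ω X A : Type*} {mΩ : MeasurableSpace Ω} {μ : Measure Ω} [IsProbabilityMeasure μ]
  (ℋ : Filtration ℕ mΩ) [MeasurableSpace X] (Q : Measure X) [IsProbabilityMeasure Q] [Fintype A]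
  [MeasurableSpace A] [MeasurableSingletonClass A] {xseq : ℕ → Ω → X} {aseq : ℕ → Ω → A}
  {π : ℕ → Ω → X → Measure A} [∀ i ω x, IsProbabilityMeasure (π i ω x)]

theorem measure_sum_Icc_half_integral_sub_ge_le_exp_neg
    (hxadapt : ∀ i, Measurable[ℋ i] (xseq i)) (haadapt : ∀ i, Measurable[ℋ i] (aseq i))
    (hπmeas : ∀ i, Measurable[(ℋ (i - 1)).prod inferInstance] (Function.uncurry (π i)))
    (hplay : ∀ i, ∀ h : X → A → ℝ, Measurable (Function.uncurry h) →
      (∃ c : ℝ, ∀ x a, |h x a| ≤ c) →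
      μ[(fun ω => h (xseq i ω) (aseq i ω)) | ℋ (i - 1)]
        =ᵐ[μ] fun ω => ∫ x, (∫ a, h x a ∂(π i ω x)) ∂Q)
    {g : X → A → ℝ} (hg : Measurable (uncurry g)) (hg01 : ∀ x a, g x a ∈ Set.Icc (0 : ℝ) 1)
    (s : ℕ) (θ : ℝ) :
    μ {ω | θ ≤ ∑ i ∈ Finset.Icc 1 s,
      ((∫ x, ∫ a, g x a ∂π i ω x ∂Q) / 2 - g (xseq i ω) (aseq i ω))}
      ≤ ENNReal.ofReal (Real.exp (-θ)) := by
  have hsect : ∀ a, Measurable fun x => g x a := fun a =>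
    hg.comp (measurable_id.prodMk measurable_const)
  refine measure_sum_Icc_ge_le_exp_neg ℋ (C := 1 / 2) (fun i => ?_) (fun i ω => ?_) (fun i => ?_)
    s θ
  · exact ((stronglyMeasurable_integral_integral_of_fintype Q (hπmeas i) hsect).measurable.mono
      (ℋ.mono (Nat.sub_le i 1)) le_rfl).div_const 2 |>.sub
        (hg.comp ((hxadapt i).prodMk (haadapt i)))
  · linarith [(integral_integral_mem_Icc Q (π i ω) hg01).2, (hg01 (xseq i ω) (aseq i ω)).1]
  · have hplay' := hplay (i + 1) (fun x a => Real.exp (-g x a)) hg.neg.exp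
      ⟨1, fun x a => abs_exp_neg_le_one (hg01 x a).1⟩
    have hπmeas' := hπmeas (i + 1)
    rw [Nat.add_sub_cancel] at hplay' hπmeas'
    exact condExp_exp_half_integral_sub_le_one (ℋ.le i) Q hπmeas' hg hg01
      ((hxadapt _).mono (ℋ.le _) le_rfl) ((haadapt _).mono (ℋ.le _) le_rfl) hplay'

theorem measure_iUnion_sum_Icc_half_integral_sub_ge_le
    (hxadapt : ∀ i, Measurable[ℋ i] (xseq i)) (haadapt : ∀ i, Measurable[ℋ i] (aseq i))
    (hπmeas : ∀ i, Measurable[(ℋ (i - 1)).prod inferInstance] (Function.uncurry (π i)))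
    (hplay : ∀ i, ∀ h : X → A → ℝ, Measurable (Function.uncurry h) →
      (∃ c : ℝ, ∀ x a, |h x a| ≤ c) →
      μ[(fun ω => h (xseq i ω) (aseq i ω)) | ℋ (i - 1)]
        =ᵐ[μ] fun ω => ∫ x, (∫ a, h x a ∂(π i ω x)) ∂Q)
    {F : Type*} [Fintype F] [Nonempty F] {g : F → X → A → ℝ} (hg : ∀ f, Measurable (uncurry (g f)))
    (hg01 : ∀ f x a, g f x a ∈ Set.Icc (0 : ℝ) 1) {δ : ℝ} (hδ : 0 < δ) :
    μ (⋃ t : ℕ, ⋃ f : F, {ω | Real.log (2 * Fintype.card F * ((t + 2 : ℕ) : ℝ) ^ 3 / δ) ≤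
      ∑ i ∈ Finset.Icc 1 (t + 1),
        ((∫ x, ∫ a, g f x a ∂π i ω x ∂Q) / 2 - g f (xseq i ω) (aseq i ω))})
      ≤ ENNReal.ofReal (δ / 2) :=
  measure_iUnion_iUnion_le_of_le_div_card_mul_cube μ (by positivity) fun t f => by
    refine (measure_sum_Icc_half_integral_sub_ge_le_exp_neg ℋ Q hxadapt haadapt hπmeas hplay
      (hg f) (hg01 f) _ _).trans_eq ?_
    rw [Real.exp_neg, Real.exp_log (by positivity)]
    push_cast; field_simp

end Bandit

theorem ae_surjective_pi_of_explore {Ω X A : Type*} [MeasurableSpace A]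
    [MeasurableSingletonClass A] [Countable A] {K : ℕ} {act : ℕ → A}
    (henum : ∀ b : A, ∃ i ∈ Finset.Icc 1 K, act i = b) {π : ℕ → Ω → X → Measure A}
    [∀ i ω x, IsProbabilityMeasure (π i ω x)]
    (hdet : ∀ i ∈ Finset.Icc 1 K, ∀ ω x, π i ω x = Measure.dirac (act i)) {t : ℕ} (ht : K < t)
    (ω : Ω) (x : X) :
    ∀ᵐ cf ∂Measure.pi (fun i : Fin (t - 1) => π (i + 1) ω x), Surjective cf :=
  ae_surjective_pi fun a => by
    obtain ⟨j, hj, rfl⟩ := henum a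
    refine ⟨⟨j - 1, by grind⟩, ?_⟩
    rw [Fin.val_mk, Nat.sub_add_cancel (Finset.mem_Icc.1 hj).1]
    exact hdet j hj ω x

theorem stmt3_general {Ω : Type*} {mΩ : MeasurableSpace Ω} (μ : Measure Ω) [IsProbabilityMeasure μ]
    (ℋ : Filtration ℕ mΩ)
    {X : Type*} [MeasurableSpace X] (Q : Measure X) [IsProbabilityMeasure Q]
    {A : Type*} [Fintype A] [DecidableEq A] [MeasurableSpace A] [MeasurableSingletonClass A]
    (K : ℕ)
    -- `act 1, …, act K` enumerates the action set
    (act : ℕ → A) (henum : ∀ b : A, ∃ i ∈ Finset.Icc 1 K, act i = b)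
    (xseq : ℕ → Ω → X) (aseq : ℕ → Ω → A)
    (hxadapt : ∀ i, Measurable[ℋ i] (xseq i))
    (haadapt : ∀ i, Measurable[ℋ i] (aseq i))
    -- the (history-measurable) policies used at each round
    (π : ℕ → Ω → X → Measure A)
    (hπprob : ∀ i ω x, IsProbabilityMeasure (π i ω x))
    (hπmeas : ∀ i, Measurable[(ℋ (i - 1)).prod inferInstance] (Function.uncurry (π i)))
    -- during the first `K` rounds each action is played once, deterministically
    (hdet : ∀ i ∈ Finset.Icc 1 K, (∀ ω x, π i ω x = Measure.dirac (act i)) ∧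
      (∀ ω, aseq i ω = act i))
    -- the action played at round `i` is drawn from `π_i(·|x_i)` with `x_i ∼ Q` fresh:
    (hplay : ∀ i, ∀ h : X → A → ℝ, Measurable (Function.uncurry h) →
      (∃ c : ℝ, ∀ x a, |h x a| ≤ c) →
      μ[(fun ω => h (xseq i ω) (aseq i ω)) | ℋ (i - 1)]
        =ᵐ[μ] fun ω => ∫ x, (∫ a, h x a ∂(π i ω x)) ∂Q)
    {F : Type*} [Fintype F]
    (fstar : F) (u : F → X → A → ℝ)
    (hu : ∀ q x a, u q x a ∈ Set.Icc (0 : ℝ) 1)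
    (humeas : ∀ q, Measurable fun p : X × A => u q p.1 p.2)
    (fhat : ℕ → Ω → F)
    (L : ℝ) (Est : ℕ → ℝ)
    (δ : ℝ) (hδ : δ ∈ Set.Ioo (0 : ℝ) 1)
    -- the offline-oracle guarantee:
    (hkey : ENNReal.ofReal (1 - δ / 2) ≤
      μ {ω | ∀ t : ℕ, ∑ i ∈ Finset.Icc 1 (t - 1),
          (u (fhat t ω) (xseq i ω) (aseq i ω) - u fstar (xseq i ω) (aseq i ω)) ^ 2 ≤
        2 * L ^ 2 * Est t}) :
    ENNReal.ofReal (1 - δ) ≤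
      μ {ω | ∀ t : ℕ, K < t →
        ∀ π' : X → Measure A, Measurable π' → (∀ x, IsProbabilityMeasure (π' x)) →
          |∫ x, (∫ a, (u (fhat t ω) x a - u fstar x a) ∂(π' x)) ∂Q| ≤
            Real.sqrt (∫ x, (∫ a,
                (∫ cf : Fin (t - 1) → A,
                  (1 / ∑ i : Fin (t - 1), if a = cf i then (1 : ℝ) else 0)
                  ∂(Measure.pi fun i : Fin (t - 1) => π (i.1 + 1) ω x))
                ∂(π' x)) ∂Q)
              * Real.sqrt (68 * Real.log (2 * (Fintype.card F : ℝ) * (t : ℝ) ^ 3 / δ)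
                  + 4 * L ^ 2 * Est t)} := by
  have := hπprob
  obtain ⟨hδ0, hδ1⟩ := hδ
  set D : F → X → A → ℝ := fun f x a => u f x a - u fstar x a
  have hD : ∀ f x a, |D f x a| ≤ 1 := fun f x a => abs_sub_le_of_nonneg_of_le
    (hu f x a).1 (hu f x a).2 (hu fstar x a).1 (hu fstar x a).2
  have hDmeas : ∀ f, Measurable (uncurry (D f)) := fun f => (humeas f).sub (humeas fstar)
  have : Nonempty F := ⟨fstar⟩
  have hbad := measure_iUnion_sum_Icc_half_integral_sub_ge_le ℋ Q hxadapt haadapt hπmeas hplay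
    (g := fun f x a => D f x a ^ 2) (fun f => (hDmeas f).pow_const 2)
    (fun f x a => sq_mem_Icc_zero_one (hD f x a)) hδ0
  convert ofReal_sub_le_measure_of_diff_subset hkey hbad (by positivity) ?_ using 2
  · ring
  rintro ω ⟨hfit, hω⟩ t ht π' hπ' hπ'prob
  have : Nonempty A := (nonempty_of_isProbabilityMeasure Q).elim fun x =>
    nonempty_of_isProbabilityMeasure (π' x)
  obtain ⟨j, hj, -⟩ := henum (Classical.arbitrary A)
  obtain ⟨s, rfl⟩ : ∃ s, t = s + 2 := ⟨t - 2, by grind⟩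
  refine (abs_integral_integral_le_sqrt_inv_visitCount_mul_sqrt_sum Q hπ'
    (κ := fun i : Fin (s + 2 - 1) => π (i + 1) ω)
    (fun i => (hπmeas _).comp (@measurable_prodMk_left _ _ (ℋ _) _ ω))
    (ae_surjective_pi_of_explore henum (fun i hi => (hdet i hi).1) ht ω)
    (g := D (fhat (s + 2) ω)) (fun a => (hDmeas _).comp (measurable_id.prodMk measurable_const))
    (hD _)).trans (mul_le_mul_of_nonneg_left (Real.sqrt_le_sqrt ?_) (Real.sqrt_nonneg _))
  simp only [Set.mem_iUnion, Set.mem_ofPred_eq, not_exists, not_le] at hω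
  have hgood := hω s (fhat (s + 2) ω)
  have hθ : 0 ≤ Real.log (2 * (Fintype.card F : ℝ) * ((s + 2 : ℕ) : ℝ) ^ 3 / δ) :=
    Real.log_nonneg <| (one_le_div hδ0).2 <| by
      nlinarith [(Nat.one_le_cast.2 Fintype.card_pos : (1 : ℝ) ≤ Fintype.card F),
        one_le_pow₀ (n := 3) (by norm_cast; omega : (1 : ℝ) ≤ ((s + 2 : ℕ) : ℝ))]
  have hfit' : ∑ i ∈ Finset.Icc 1 (s + 1), D (fhat (s + 2) ω) (xseq i ω) (aseq i ω) ^ 2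
      ≤ 2 * L ^ 2 * Est (s + 2) := hfit (s + 2)
  rw [Finset.sum_sub_distrib, ← Finset.sum_div] at hgood
  rw [sum_fin_add_one_eq_sum_Icc (fun i => ∫ x, ∫ a, D (fhat (s + 2) ω) x a ^ 2 ∂π i ω x ∂Q)]
  change ∑ i ∈ Finset.Icc 1 (s + 1), _ ≤ _
  linarith

/-- Sequential interaction: contexts `x_i` i.i.d. from `Q`; the action set `A`
is finite with `|A| = K`; for `i ≤ K` the learner deterministically plays the `i`-th action
`act i` (enumerating `A`); for all rounds the learner plays `a_i ∼ π_i(·|x_i)` where the policy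
`π_i` is measurable w.r.t. the history filtration `ℋ (i−1)`. `F` is a finite model class with
true model `fstar`, `u : F × X × A → [0,1]` a utility, and `f̂^t` an `ℋ (t−1)`-measurable
estimator. If with probability `≥ 1 − δ/2`, for all `t`,
`∑_{i=1}^{t−1} (u(f̂^t,x_i,a_i) − u(f*,x_i,a_i))² ≤ 2L²E_t`, then with probability `≥ 1 − δ`,
simultaneously for all `t > K` and all stochastic policies `π`:
`|E[u(f̂^t,x,a) − u(f*,x,a)]| ≤ √(E[1/∑_{i=1}^{t−1} 𝟙{a = ã_i}]) · √(68·log(2|F|t³/δ) + 4L²E_t)`,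
the expectations being over a fresh `x ∼ Q`, `a ∼ π(·|x)`, and independent counterfactual
actions `ã_i ∼ π_i(·|x)`. -/
theorem stmt3 {Ω : Type*} {mΩ : MeasurableSpace Ω} (μ : Measure Ω) [IsProbabilityMeasure μ]
    (ℋ : Filtration ℕ mΩ)
    {X : Type*} [MeasurableSpace X] (Q : Measure X) [IsProbabilityMeasure Q]
    {A : Type*} [Fintype A] [DecidableEq A] [MeasurableSpace A] [MeasurableSingletonClass A]
    (K : ℕ) (hKcard : Fintype.card A = K)
    -- `act 1, …, act K` enumerates the action set
    (act : ℕ → A) (henum : ∀ b : A, ∃ i ∈ Finset.Icc 1 K, act i = b)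
    (xseq : ℕ → Ω → X) (aseq : ℕ → Ω → A)
    (hxmeas : ∀ i, Measurable (xseq i))
    (hxadapt : ∀ i, Measurable[ℋ i] (xseq i))
    (haadapt : ∀ i, Measurable[ℋ i] (aseq i))
    -- contexts are i.i.d. from `Q`: each `x_i` has law `Q` and is independent of the past
    (hxlaw : ∀ i, Measure.map (xseq i) μ = Q)
    (hxindep : ∀ i, Indep (MeasurableSpace.comap (xseq i) inferInstance) (ℋ (i - 1)) μ)
    -- the (history-measurable) policies used at each round
    (π : ℕ → Ω → X → Measure A)
    (hπprob : ∀ i ω x, IsProbabilityMeasure (π i ω x))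
    (hπmeas : ∀ i, Measurable[(ℋ (i - 1)).prod inferInstance] (Function.uncurry (π i)))
    -- during the first `K` rounds each action is played once, deterministically
    (hdet : ∀ i ∈ Finset.Icc 1 K, (∀ ω x, π i ω x = Measure.dirac (act i)) ∧
      (∀ ω, aseq i ω = act i))
    -- the action played at round `i` is drawn from `π_i(·|x_i)` with `x_i ∼ Q` fresh:
    (hplay : ∀ i, ∀ h : X → A → ℝ, Measurable (Function.uncurry h) →
      (∃ c : ℝ, ∀ x a, |h x a| ≤ c) →
      μ[(fun ω => h (xseq i ω) (aseq i ω)) | ℋ (i - 1)]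
        =ᵐ[μ] fun ω => ∫ x, (∫ a, h x a ∂(π i ω x)) ∂Q)
    {F : Type*} [Fintype F] [Nonempty F] [MeasurableSpace F] [MeasurableSingletonClass F]
    (fstar : F) (u : F → X → A → ℝ)
    (hu : ∀ q x a, u q x a ∈ Set.Icc (0 : ℝ) 1)
    (humeas : ∀ q, Measurable fun p : X × A => u q p.1 p.2)
    (fhat : ℕ → Ω → F) (hfhat : ∀ t, Measurable[ℋ (t - 1)] (fhat t))
    (L : ℝ) (hL : 0 < L) (Est : ℕ → ℝ) (hEst : ∀ t, 0 ≤ Est t)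
    (δ : ℝ) (hδ : δ ∈ Set.Ioo (0 : ℝ) 1)
    -- the offline-oracle guarantee:
    (hkey : ENNReal.ofReal (1 - δ / 2) ≤
      μ {ω | ∀ t : ℕ, ∑ i ∈ Finset.Icc 1 (t - 1),
          (u (fhat t ω) (xseq i ω) (aseq i ω) - u fstar (xseq i ω) (aseq i ω)) ^ 2 ≤
        2 * L ^ 2 * Est t}) :
    ENNReal.ofReal (1 - δ) ≤
      μ {ω | ∀ t : ℕ, K < t →
        ∀ π' : X → Measure A, Measurable π' → (∀ x, IsProbabilityMeasure (π' x)) →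
          |∫ x, (∫ a, (u (fhat t ω) x a - u fstar x a) ∂(π' x)) ∂Q| ≤
            Real.sqrt (∫ x, (∫ a,
                (∫ cf : Fin (t - 1) → A,
                  (1 / ∑ i : Fin (t - 1), if a = cf i then (1 : ℝ) else 0)
                  ∂(Measure.pi fun i : Fin (t - 1) => π (i.1 + 1) ω x))
                ∂(π' x)) ∂Q)
              * Real.sqrt (68 * Real.log (2 * (Fintype.card F : ℝ) * (t : ℝ) ^ 3 / δ)
                  + 4 * L ^ 2 * Est t)} :=
  stmt3_general μ ℋ Q K act henum xseq aseq hxadapt haadapt π hπprob hπmeas hdet hplay fstar u hu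
    humeas fhat L Est δ hδ hkey
end

section
/- Let (z_i)_{i=1}^{t} be a sequence in Z, let ĝ^t ∈ G, let r_t ≥ 0, and define G_t = { g ∈ G : Σ_{i=1}^{t−1} D²(g_{z_i} ‖ ĝ^t_{z_i}) ≤ r_t }. Fix ε > 0 and suppose ω_{G_t}(z_t) > ε. If z_t is ε-dependent on each of H pairwise disjoint subsequences of (z_1,…,z_{t−1}), then H ≤ 4 r_t / ε². -/
/-- `z₀` is `ε`-dependent on the subsequence of `(zs i)` indexed by the finite index set `S`,
with respect to the class `G` and divergence `D`: every pair `g, g' ∈ G` whose cumulative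
squared divergence along the subsequence is at most `ε²` also satisfies
`D²(g z₀ ‖ g' z₀) ≤ ε²`. -/
def EpsDependentOn {Z P : Type*} (G : Set (Z → P)) (D : P → P → ℝ) (ε : ℝ)
    (z₀ : Z) (zs : ℕ → Z) (S : Finset ℕ) : Prop :=
  ∀ g ∈ G, ∀ g' ∈ G,
    (∑ i ∈ S, (D (g (zs i)) (g' (zs i))) ^ 2 ≤ ε ^ 2) → (D (g z₀) (g' z₀)) ^ 2 ≤ ε ^ 2

/-- The amplitude `ω_C(z)` of a subclass `C` at a point `z`. -/
noncomputable def amplitude {Z P : Type*} (D : P → P → ℝ) (C : Set (Z → P)) (z : Z) : ℝ :=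
  sSup ((fun p : (Z → P) × (Z → P) => D (p.1 z) (p.2 z)) '' (C ×ˢ C))

/-- Let `(z_i)_{i=1}^t` be a sequence in `Z`, `ĝ^t ∈ G`, `r_t ≥ 0`, and
`G_t = { g ∈ G : ∑_{i=1}^{t−1} D²(g z_i ‖ ĝ^t z_i) ≤ r_t }`. Fix `ε > 0` and suppose
`ω_{G_t}(z_t) > ε`. If `z_t` is `ε`-dependent on each of `H` pairwise disjoint subsequences of
`(z_1,…,z_{t−1})`, then `H ≤ 4 r_t / ε²`. -/
theorem stmt6 {Z P : Type*} (G : Set (Z → P)) (D : P → P → ℝ)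
    (hsymm : ∀ p q, D p q = D q p) (hnonneg : ∀ p q, 0 ≤ D p q)
    (hrefl : ∀ p, D p p = 0) (htri : ∀ p q s, D p s ≤ D p q + D q s)
    (t : ℕ) (z : ℕ → Z) (ghat : Z → P) (hghat : ghat ∈ G)
    (rt : ℝ) (hrt : 0 ≤ rt) (ε : ℝ) (hε : 0 < ε)
    (hamp : ε < amplitude D
      {g ∈ G | ∑ i ∈ Finset.Icc 1 (t - 1), (D (g (z i)) (ghat (z i))) ^ 2 ≤ rt} (z t))
    (H : ℕ) (S : Fin H → Finset ℕ)
    (hS : ∀ h, S h ⊆ Finset.Icc 1 (t - 1))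
    (hdisj : Pairwise fun h h' => Disjoint (S h) (S h'))
    (hdep : ∀ h, EpsDependentOn G D ε (z t) z (S h)) :
    (H : ℝ) ≤ 4 * rt / ε ^ 2 := by
  rcases Nat.eq_zero_or_pos H with h0 | h0
  · subst h0; simp; positivity
  -- extract a pair with divergence > ε at z t
  obtain ⟨x, hx, hεx⟩ : ∃ x ∈ ((fun p : (Z → P) × (Z → P) => D (p.1 (z t)) (p.2 (z t))) ''
      ({g ∈ G | ∑ i ∈ Finset.Icc 1 (t - 1), (D (g (z i)) (ghat (z i))) ^ 2 ≤ rt} ×ˢ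
       {g ∈ G | ∑ i ∈ Finset.Icc 1 (t - 1), (D (g (z i)) (ghat (z i))) ^ 2 ≤ rt})), ε < x := by
    by_contra hcon
    push_neg at hcon
    exact absurd hamp (not_lt.2 (Real.sSup_le (fun x hx => hcon x hx) hε.le))
  obtain ⟨⟨g, g'⟩, hmem, rfl⟩ := hx
  obtain ⟨⟨hgG, hgr⟩, ⟨hg'G, hg'r⟩⟩ := hmem
  -- for each h, the sum over S h exceeds ε²
  have hsq : ε ^ 2 < (D (g (z t)) (g' (z t))) ^ 2 := by
    have := hnonneg (g (z t)) (g' (z t)); nlinarith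
  have key : ∀ h : Fin H, ε ^ 2 < ∑ i ∈ S h, (D (g (z i)) (g' (z i))) ^ 2 := by
    intro h
    by_contra hcon
    push_neg at hcon
    exact absurd (hdep h g hgG g' hg'G hcon) (not_le.2 hsq)
  -- pointwise bound
  have hpt : ∀ i, (D (g (z i)) (g' (z i))) ^ 2 ≤
      2 * (D (g (z i)) (ghat (z i))) ^ 2 + 2 * (D (g' (z i)) (ghat (z i))) ^ 2 := by
    intro i
    have h1 := htri (g (z i)) (ghat (z i)) (g' (z i))
    have h2 := hsymm (ghat (z i)) (g' (z i))
    have h3 := hnonneg (g (z i)) (g' (z i))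
    have h4 := hnonneg (g (z i)) (ghat (z i))
    have h5 := hnonneg (g' (z i)) (ghat (z i))
    nlinarith [sq_nonneg (D (g (z i)) (ghat (z i)) - D (g' (z i)) (ghat (z i)))]
  -- sum over disjoint union
  have hsum : (H : ℝ) * ε ^ 2 < 4 * rt := by
    have h1 : (H : ℝ) * ε ^ 2 < ∑ h : Fin H, ∑ i ∈ S h, (D (g (z i)) (g' (z i))) ^ 2 := by
      calc (H : ℝ) * ε ^ 2 = ∑ _h : Fin H, ε ^ 2 := by
              simp [Finset.sum_const, mul_comm]
        _ < _ := Finset.sum_lt_sum_of_nonempty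
            (by simp [Finset.univ_nonempty_iff]; exact Fin.pos_iff_nonempty.1 h0)
            (fun h _ => key h)
    have h2 : ∑ h : Fin H, ∑ i ∈ S h, (D (g (z i)) (g' (z i))) ^ 2
        ≤ ∑ i ∈ Finset.Icc 1 (t - 1), (D (g (z i)) (g' (z i))) ^ 2 := by
      rw [← Finset.sum_biUnion (fun a _ b _ hab => hdisj hab)]
      refine Finset.sum_le_sum_of_subset_of_nonneg ?_ (fun i _ _ => sq_nonneg _)
      exact Finset.biUnion_subset.2 fun h _ => hS h
    have h3 : ∑ i ∈ Finset.Icc 1 (t - 1), (D (g (z i)) (g' (z i))) ^ 2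
        ≤ 2 * rt + 2 * rt := by
      calc ∑ i ∈ Finset.Icc 1 (t - 1), (D (g (z i)) (g' (z i))) ^ 2
          ≤ ∑ i ∈ Finset.Icc 1 (t - 1), (2 * (D (g (z i)) (ghat (z i))) ^ 2
              + 2 * (D (g' (z i)) (ghat (z i))) ^ 2) :=
            Finset.sum_le_sum fun i _ => hpt i
        _ = 2 * (∑ i ∈ Finset.Icc 1 (t - 1), (D (g (z i)) (ghat (z i))) ^ 2)
              + 2 * (∑ i ∈ Finset.Icc 1 (t - 1), (D (g' (z i)) (ghat (z i))) ^ 2) := by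
            rw [Finset.sum_add_distrib, Finset.mul_sum, Finset.mul_sum]
        _ ≤ 2 * rt + 2 * rt := by linarith
    linarith
  rw [le_div_iff₀ (by positivity)]
  linarith
end

section
/- Fix ε > 0 and let d = dim_E(G, D, ε) ≥ 1. Then for every finite sequence z_1,…,z_τ in Z there exists an index j ∈ {1,…,τ} such that z_j is ε-dependent on at least τ/d − 1 pairwise disjoint subsequences of (z_1,…,z_{j−1}). -/
/-- `z` is `ε`-dependent on the finite sequence (list) `l` with respect to the class `G` and
divergence `D`. -/
def EpsDependent {Z P : Type*} (G : Set (Z → P)) (D : P → P → ℝ) (ε : ℝ)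
    (z : Z) (l : List Z) : Prop :=
  ∀ g ∈ G, ∀ g' ∈ G,
    (l.map fun w => (D (g w) (g' w)) ^ 2).sum ≤ ε ^ 2 → (D (g z) (g' z)) ^ 2 ≤ ε ^ 2

/-- The `ε`-generalized-eluder dimension of `G` with respect to `D`. -/
noncomputable def dimE {Z P : Type*} (G : Set (Z → P)) (D : P → P → ℝ) (ε : ℝ) : ℕ :=
  sSup {n : ℕ | ∃ (zs : Fin n → Z) (ε' : ℝ), ε ≤ ε' ∧
    ∀ i : Fin n, ¬ EpsDependent G D ε' (zs i) ((List.ofFn zs).take i)}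

/-!
Greedy colouring with `K = ⌊(τ - 1) / d⌋` colours: process `z_1, z_2, …` in order and give `z_j`
a colour whose class so far it is `ε`-independent of. If at some step `z_j` is `ε`-dependent on
all `K` colour classes, these classes are the required disjoint subsequences. Otherwise every
class is an `ε`-independent sequence, hence has at most `d` elements, and `τ ≤ K d ≤ τ - 1`.
-/

open Finset

lemma List.SortedLT.toFinset_take {α : Type*} [LinearOrder α] [DecidableEq α] {l : List α}
    (hl : l.SortedLT) {i : ℕ} (hi : i < l.length) :
    (l.take i).toFinset = l.toFinset.filter (· < l[i]) := by
  ext x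
  rw [Finset.mem_filter, List.mem_toFinset, List.mem_toFinset, List.mem_take_iff_getElem,
    List.mem_iff_getElem]
  constructor
  · rintro ⟨j, hj, rfl⟩
    exact ⟨⟨j, _, rfl⟩, (hl.getElem_lt_getElem_iff).2 (lt_min_iff.1 hj).1⟩
  · rintro ⟨⟨j, hj, rfl⟩, hlt⟩
    exact ⟨j, lt_min ((hl.getElem_lt_getElem_iff).1 hlt) hj, rfl⟩

section Eluder

variable {Z P : Type*} (G : Set (Z → P)) (D : P → P → ℝ) (ε : ℝ) (z : ℕ → Z)

lemma epsDependent_map_iff_epsDependentOn {z₀ : Z} {l : List ℕ} (hl : l.Nodup) :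
    EpsDependent G D ε z₀ (l.map z) ↔ EpsDependentOn G D ε z₀ z l.toFinset := by
  simp only [EpsDependent, EpsDependentOn, List.map_map, List.sum_toFinset _ hl]
  rfl

/-- Finite sets of indices are read in increasing order. -/
def EpsIndependentSet (S : Finset ℕ) : Prop :=
  ∀ i ∈ S, ¬ EpsDependentOn G D ε (z i) z (S.filter (· < i))

variable {G D ε z}

lemma card_le_dimE (hpos : 0 < dimE G D ε) {S : Finset ℕ} (hS : EpsIndependentSet G D ε z S) :
    S.card ≤ dimE G D ε := by
  unfold dimE at hpos ⊢
  set L := S.sort (· ≤ ·)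
  have hL : L.SortedLT := sortedLT_sort S
  have hbdd : BddAbove {n : ℕ | ∃ (zs : Fin n → Z) (ε' : ℝ), ε ≤ ε' ∧
      ∀ i : Fin n, ¬ EpsDependent G D ε' (zs i) ((List.ofFn zs).take i)} := by
    by_contra hunb
    rw [csSup_of_not_bddAbove hunb, csSup_empty] at hpos
    exact hpos.ne rfl
  rw [← length_sort (· ≤ ·)]
  refine le_csSup hbdd ⟨fun i => z L[i], ε, le_rfl, fun i => ?_⟩
  rw [show (List.ofFn fun j : Fin L.length => z L[j]) = L.map z from List.ofFn_getElem_eq_map L z,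
    ← List.map_take,
    epsDependent_map_iff_epsDependentOn G D ε z (hL.nodup.sublist (List.take_sublist _ _)),
    hL.toFinset_take i.2, sort_toFinset]
  exact hS _ (mem_sort _ |>.1 (List.getElem_mem _))

variable (G D ε z)

def IsIndepColoring (K n : ℕ) (c : ℕ → ℕ) : Prop :=
  ∀ i ∈ Icc 1 n, c i < K ∧ ¬ EpsDependentOn G D ε (z i) z ((Icc 1 (i - 1)).filter (c · = c i))

def DependsOnDisjointFamily (K j : ℕ) : Prop :=
  ∃ S : Fin K → Finset ℕ, (∀ k, S k ⊆ Icc 1 (j - 1)) ∧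
    (Pairwise fun k k' => Disjoint (S k) (S k')) ∧ ∀ k, EpsDependentOn G D ε (z j) z (S k)

variable {G D ε z}

lemma IsIndepColoring.epsIndependentSet {K n : ℕ} {c : ℕ → ℕ}
    (hc : IsIndepColoring G D ε z K n c) (k : ℕ) :
    EpsIndependentSet G D ε z ((Icc 1 n).filter (c · = k)) := by
  intro i hi
  obtain ⟨hin, rfl⟩ := mem_filter.1 hi
  have hpred : ((Icc 1 n).filter (c · = c i)).filter (· < i) =
      (Icc 1 (i - 1)).filter (c · = c i) := by
    ext x
    simp only [mem_filter, mem_Icc] at hin ⊢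
    omega
  rw [hpred]
  exact (hc i hin).2

lemma IsIndepColoring.le_mul_dimE {K n : ℕ} {c : ℕ → ℕ} (hc : IsIndepColoring G D ε z K n c)
    (hpos : 0 < dimE G D ε) : n ≤ K * dimE G D ε :=
  calc n = #(Icc 1 n) := by simp
    _ = ∑ k ∈ range K, #((Icc 1 n).filter (c · = k)) :=
        card_eq_sum_card_fiberwise fun i hi => mem_range.2 (hc i hi).1
    _ ≤ ∑ _k ∈ range K, dimE G D ε :=
        sum_le_sum fun k _ => card_le_dimE hpos (hc.epsIndependentSet k)
    _ = K * dimE G D ε := by simp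

lemma IsIndepColoring.update {K n k : ℕ} {c : ℕ → ℕ} (hc : IsIndepColoring G D ε z K n c)
    (hk : k < K) (hind : ¬ EpsDependentOn G D ε (z (n + 1)) z ((Icc 1 n).filter (c · = k))) :
    IsIndepColoring G D ε z K (n + 1) (Function.update c (n + 1) k) := by
  intro i hi
  rw [mem_Icc] at hi
  have hclass : ∀ m, (Icc 1 (i - 1)).filter (Function.update c (n + 1) k · = m) =
      (Icc 1 (i - 1)).filter (c · = m) :=
    fun m => filter_congr fun x hx => by
      rw [Function.update_of_ne (by rw [mem_Icc] at hx; omega)]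
  rw [hclass]
  rcases hi.2.lt_or_eq with hlt | rfl
  · rw [Function.update_of_ne (by omega)]
    exact hc i (mem_Icc.2 ⟨hi.1, by omega⟩)
  · rw [Function.update_self, Nat.add_sub_cancel]
    exact ⟨hk, hind⟩

lemma exists_dependsOnDisjointFamily_or_isIndepColoring (K n : ℕ) :
    (∃ j ∈ Icc 1 n, DependsOnDisjointFamily G D ε z K j) ∨
      ∃ c, IsIndepColoring G D ε z K n c := by
  induction n with
  | zero => exact Or.inr ⟨id, by simp [IsIndepColoring]⟩
  | succ n ih =>
    rcases ih with ⟨j, hj, hfam⟩ | ⟨c, hc⟩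
    · exact Or.inl ⟨j, Icc_subset_Icc_right n.le_succ hj, hfam⟩
    by_cases hdep : ∀ k < K, EpsDependentOn G D ε (z (n + 1)) z ((Icc 1 n).filter (c · = k))
    · refine Or.inl ⟨n + 1, by simp, fun k => (Icc 1 n).filter (c · = k),
        fun k => by simp, fun k k' hne => ?_, fun k => hdep k k.2⟩
      exact disjoint_filter.2 fun i _ hk hk' => hne (Fin.ext (hk.symm.trans hk'))
    · push Not at hdep
      obtain ⟨k, hk, hind⟩ := hdep
      exact Or.inr ⟨_, hc.update hk hind⟩

end Eluder

lemma div_sub_one_le_pred_div (τ d : ℕ) (hd : 0 < d) : (τ : ℝ) / d - 1 ≤ ((τ - 1) / d : ℕ) := by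
  have hτ : τ ≤ ((τ - 1) / d + 1) * d := by
    have := Nat.lt_div_mul_add (a := τ - 1) hd
    rw [add_mul, one_mul]
    omega
  have hd' : (0 : ℝ) < d := by exact_mod_cast hd
  rw [sub_le_iff_le_add, div_le_iff₀ hd']
  exact_mod_cast hτ

theorem stmt7_general {Z P : Type*} (G : Set (Z → P)) (D : P → P → ℝ)
    (ε : ℝ) (d : ℕ) (hd : d = dimE G D ε) (hd1 : 1 ≤ d)
    (τ : ℕ) (hτ : 1 ≤ τ) (z : ℕ → Z) :
    ∃ j ∈ Finset.Icc 1 τ, ∃ (H : ℕ) (S : Fin H → Finset ℕ),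
      (τ : ℝ) / (d : ℝ) - 1 ≤ (H : ℝ) ∧
      (∀ h, S h ⊆ Finset.Icc 1 (j - 1)) ∧
      (Pairwise fun h h' => Disjoint (S h) (S h')) ∧
      (∀ h, EpsDependentOn G D ε (z j) z (S h)) := by
  rcases exists_dependsOnDisjointFamily_or_isIndepColoring (z := z) ((τ - 1) / d) τ with
    ⟨j, hj, S, hsub, hdisj, hdep⟩ | ⟨c, hc⟩
  · exact ⟨j, hj, _, S, div_sub_one_le_pred_div τ d hd1, hsub, hdisj, hdep⟩
  · have hfit : τ ≤ (τ - 1) / d * d := hd ▸ hc.le_mul_dimE (hd ▸ hd1)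
    have := Nat.div_mul_le_self (τ - 1) d
    omega

/-- Fix `ε > 0` and let `d = dim_E(G, D, ε) ≥ 1`. Then for every finite
sequence `z_1,…,z_τ` in `Z` there exists an index `j ∈ {1,…,τ}` such that `z_j` is
`ε`-dependent on at least `τ/d − 1` pairwise disjoint subsequences of `(z_1,…,z_{j−1})`. -/
theorem stmt7 {Z P : Type*} (G : Set (Z → P)) (D : P → P → ℝ)
    (hsymm : ∀ p q, D p q = D q p) (hnonneg : ∀ p q, 0 ≤ D p q)
    (hrefl : ∀ p, D p p = 0) (htri : ∀ p q s, D p s ≤ D p q + D q s)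
    (ε : ℝ) (hε : 0 < ε) (d : ℕ) (hd : d = dimE G D ε) (hd1 : 1 ≤ d)
    (τ : ℕ) (hτ : 1 ≤ τ) (z : ℕ → Z) :
    ∃ j ∈ Finset.Icc 1 τ, ∃ (H : ℕ) (S : Fin H → Finset ℕ),
      (τ : ℝ) / (d : ℝ) - 1 ≤ (H : ℝ) ∧
      (∀ h, S h ⊆ Finset.Icc 1 (j - 1)) ∧
      (Pairwise fun h h' => Disjoint (S h) (S h')) ∧
      (∀ h, EpsDependentOn G D ε (z j) z (S h)) :=
  stmt7_general G D ε d hd hd1 τ hτ z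
end

section
/- Let (Y, μ) be a measurable space with σ-finite measure μ, let h : Y → [0,∞) and T : Y → ℝ^d be measurable, and for η ∈ ℝ^d define the log-partition function A(η) = log ∫ h(y)·exp(ηᵀT(y)) dμ(y). Assume A is finite and twice continuously differentiable on ℝ^d with λ̲‖v‖₂² ≤ vᵀ∇²A(η)v ≤ λ̄‖v‖₂² for all η, v ∈ ℝ^d, where 0 < λ̲ ≤ λ̄. For η₁, η₂ ∈ ℝ^d let p_i(y) = h(y)·exp(η_iᵀT(y) − A(η_i)) be the corresponding exponential-family densities. Then: 1 − exp( −(λ̲/8)‖η₁ − η₂‖₂² ) ≤ D_H²(p₁‖p₂) ≤ 1 − exp( −(λ̄/8)‖η₁ − η₂‖₂² ). -/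
open MeasureTheory Real Set

/-!
The Hellinger affinity of two members of an exponential family is
`∫ √(p₁ p₂) = exp (A m - (A η₁ + A η₂) / 2)` with `m` the midpoint of `η₁, η₂`, since
`√(p₁ p₂)` is the unnormalised density at `m`. The Hessian bounds make the midpoint gap
`(A η₁ + A η₂) / 2 - A m` lie between `λ̲/8 ‖η₁ - η₂‖²` and `λ̄/8 ‖η₁ - η₂‖²`: along the line
through `η₁, η₂` the function `A` minus a suitable quadratic is convex (resp. concave).
-/

section LineRestriction

variable {E F : Type*} [NormedAddCommGroup E] [NormedSpace ℝ E]
  [NormedAddCommGroup F] [NormedSpace ℝ F]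

theorem hasDerivAt_comp_add_smul {B : E → F} {m w : E} {t : ℝ}
    (hB : DifferentiableAt ℝ B (m + t • w)) :
    HasDerivAt (fun s : ℝ => B (m + s • w)) (fderiv ℝ B (m + t • w) w) t := by
  have hline : HasDerivAt (fun s : ℝ => m + s • w) w t := by
    simpa using ((hasDerivAt_id t).smul_const w).const_add m
  exact hB.hasFDerivAt.comp_hasDerivAt t hline

theorem hasDerivAt_deriv_comp_add_smul {A : E → ℝ} (hA : ContDiff ℝ 2 A) (m w : E) (t : ℝ) :
    HasDerivAt (deriv fun s : ℝ => A (m + s • w))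
      (iteratedFDeriv ℝ 2 A (m + t • w) ![w, w]) t := by
  have hderiv : deriv (fun s : ℝ => A (m + s • w)) = fun s => fderiv ℝ A (m + s • w) w :=
    funext fun s => (hasDerivAt_comp_add_smul (hA.differentiable two_ne_zero _)).deriv
  have hA' : Differentiable ℝ (fderiv ℝ A) :=
    (hA.fderiv_right le_rfl).differentiable one_ne_zero
  rw [hderiv, iteratedFDeriv_two_apply]
  simpa using (hasDerivAt_comp_add_smul (hA' (m + t • w))).clm_apply (hasDerivAt_const t w)

end LineRestriction

theorem convexOn_sub_mul_sq_of_le_deriv2 {f : ℝ → ℝ} (hf : Differentiable ℝ f)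
    (hf' : Differentiable ℝ (deriv f)) {c : ℝ} (hc : ∀ t, c ≤ deriv^[2] f t) :
    ConvexOn ℝ univ fun t => f t - c / 2 * t ^ 2 := by
  have hderiv : deriv (fun t => f t - c / 2 * t ^ 2) = fun t => deriv f t - c * t := by
    funext t
    exact ((hf t).hasDerivAt.sub ((hasDerivAt_pow 2 t).const_mul (c / 2))).deriv.trans
      (by ring)
  refine convexOn_univ_of_deriv2_nonneg (hf.sub (by fun_prop)) ?_ fun t => ?_
  · rw [hderiv]
    exact hf'.sub (by fun_prop)
  · have hderiv2 : HasDerivAt (fun t => deriv f t - c * t) (deriv^[2] f t - c) t :=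
      (hf' t).hasDerivAt.sub (((hasDerivAt_id t).const_mul c).congr_deriv (mul_one c))
    rw [Function.iterate_succ_apply, Function.iterate_one, hderiv, hderiv2.deriv]
    linarith [hc t]

theorem add_le_midpoint_of_le_iteratedFDeriv_two {E : Type*} [NormedAddCommGroup E]
    [NormedSpace ℝ E] {A : E → ℝ} (hA : ContDiff ℝ 2 A) {c : ℝ}
    (hHess : ∀ η v, c * ‖v‖ ^ 2 ≤ iteratedFDeriv ℝ 2 A η ![v, v]) (x y : E) :
    A ((2 : ℝ)⁻¹ • (x + y)) + c / 8 * ‖x - y‖ ^ 2 ≤ (A x + A y) / 2 := by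
  set m : E := (2 : ℝ)⁻¹ • (x + y)
  set w : E := (2 : ℝ)⁻¹ • (x - y)
  have hconv := convexOn_sub_mul_sq_of_le_deriv2 (c := c * ‖w‖ ^ 2)
    (fun t => (hasDerivAt_comp_add_smul (hA.differentiable two_ne_zero _)).differentiableAt)
    (fun t => (hasDerivAt_deriv_comp_add_smul hA m w t).differentiableAt)
    (fun t => by
      rw [Function.iterate_succ_apply, Function.iterate_one,
        (hasDerivAt_deriv_comp_add_smul hA m w t).deriv]
      exact hHess _ w)
  have hmid := hconv.2 (mem_univ 1) (mem_univ (-1)) (by norm_num : (0 : ℝ) ≤ 2⁻¹)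
    (by norm_num : (0 : ℝ) ≤ 2⁻¹) (by norm_num)
  have h₁ : m + (1 : ℝ) • w = x := by module
  have h₂ : m + (-1 : ℝ) • w = y := by module
  have hw : ‖w‖ ^ 2 = ‖x - y‖ ^ 2 / 4 := by
    rw [norm_smul, mul_pow]
    norm_num
    ring
  simp only [h₁, h₂, hw] at hmid
  norm_num at hmid
  linarith

theorem sqrt_mul_exp_family {h : ℝ} (hh : 0 ≤ h) (θ₁ θ₂ a₁ a₂ : ℝ) :
    √(h * exp (θ₁ - a₁) * (h * exp (θ₂ - a₂))) =
      h * exp ((θ₁ + θ₂) / 2 - (a₁ + a₂) / 2) := by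
  have hexponent : θ₁ - a₁ + (θ₂ - a₂) =
      ((θ₁ + θ₂) / 2 - (a₁ + a₂) / 2) + ((θ₁ + θ₂) / 2 - (a₁ + a₂) / 2) := by ring
  rw [mul_mul_mul_comm, ← exp_add, hexponent, exp_add, ← mul_mul_mul_comm,
    sqrt_mul_self (by positivity)]

theorem sum_inv_two_smul_add_mul {n : ℕ} (x y v : EuclideanSpace ℝ (Fin n)) :
    ∑ i, ((2 : ℝ)⁻¹ • (x + y)) i * v i = ((∑ i, x i * v i) + ∑ i, y i * v i) / 2 := by
  simp only [PiLp.smul_apply, PiLp.add_apply, smul_eq_mul, ← Finset.sum_add_distrib,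
    Finset.sum_div]
  exact Finset.sum_congr rfl fun i _ => by ring

theorem stmt15_general {Y : Type*} [MeasurableSpace Y] (μ : Measure Y)
    (d : ℕ) (h : Y → ℝ) (hh : ∀ y, 0 ≤ h y)
    (T : Y → EuclideanSpace ℝ (Fin d))
    (A : EuclideanSpace ℝ (Fin d) → ℝ)
    (hA : ∀ η, A η = Real.log (∫ y, h y * Real.exp (∑ i, η i * T y i) ∂μ))
    (hfin : ∀ η : EuclideanSpace ℝ (Fin d),
      Integrable (fun y => h y * Real.exp (∑ i, η i * T y i)) μ ∧
        0 < ∫ y, h y * Real.exp (∑ i, η i * T y i) ∂μ)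
    (hAsmooth : ContDiff ℝ 2 A)
    (lam lam' : ℝ)
    (hHess : ∀ η v : EuclideanSpace ℝ (Fin d),
      lam * ‖v‖ ^ 2 ≤ iteratedFDeriv ℝ 2 A η ![v, v] ∧
        iteratedFDeriv ℝ 2 A η ![v, v] ≤ lam' * ‖v‖ ^ 2)
    (η₁ η₂ : EuclideanSpace ℝ (Fin d))
    (p₁ p₂ : Y → ℝ)
    (hp₁ : ∀ y, p₁ y = h y * Real.exp ((∑ i, η₁ i * T y i) - A η₁))
    (hp₂ : ∀ y, p₂ y = h y * Real.exp ((∑ i, η₂ i * T y i) - A η₂)) :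
    1 - Real.exp (-(lam / 8) * ‖η₁ - η₂‖ ^ 2) ≤
        1 - ∫ y, Real.sqrt (p₁ y * p₂ y) ∂μ ∧
      1 - ∫ y, Real.sqrt (p₁ y * p₂ y) ∂μ ≤
        1 - Real.exp (-(lam' / 8) * ‖η₁ - η₂‖ ^ 2) := by
  have haffinity : ∫ y, √(p₁ y * p₂ y) ∂μ =
      exp (A ((2 : ℝ)⁻¹ • (η₁ + η₂)) - (A η₁ + A η₂) / 2) := by
    simp_rw [hp₁, hp₂, sqrt_mul_exp_family (hh _), ← sum_inv_two_smul_add_mul, exp_sub,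
      ← mul_div_assoc]
    rw [integral_div, ← exp_log (hfin _).2, ← hA]
  have hlower := add_le_midpoint_of_le_iteratedFDeriv_two hAsmooth
    (fun η v => (hHess η v).1) η₁ η₂
  have hupper := add_le_midpoint_of_le_iteratedFDeriv_two (A := -A) hAsmooth.neg (c := -lam')
    (fun η v => by
      rw [iteratedFDeriv_neg_apply, neg_apply, neg_mul, neg_le_neg_iff]
      exact (hHess η v).2) η₁ η₂
  simp only [Pi.neg_apply] at hupper
  rw [haffinity]
  constructor
  · gcongr 1 - exp ?_
    linarith
  · gcongr 1 - exp ?_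
    linarith

/-- Let `(Y, μ)` be a σ-finite measure space, `h : Y → [0,∞)` and
`T : Y → ℝ^d` measurable, and let `A(η) = log ∫ h(y)·exp(ηᵀT(y)) dμ(y)` be the log-partition
function, assumed finite (integrable defining integrand with positive integral) and twice
continuously differentiable with `λ̲‖v‖² ≤ vᵀ∇²A(η)v ≤ λ̄‖v‖²` for all `η, v`, where
`0 < λ̲ ≤ λ̄`. Then the exponential-family densities `pᵢ(y) = h(y)·exp(ηᵢᵀT(y) − A(ηᵢ))`
satisfy `1 − exp(−(λ̲/8)‖η₁ − η₂‖²) ≤ D_H²(p₁‖p₂) ≤ 1 − exp(−(λ̄/8)‖η₁ − η₂‖²)`,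
where `D_H²(p‖q) = 1 − ∫ √(p q) dμ`. -/
theorem stmt15 {Y : Type*} [MeasurableSpace Y] (μ : Measure Y) [SigmaFinite μ]
    (d : ℕ) (h : Y → ℝ) (hh : ∀ y, 0 ≤ h y) (hhmeas : Measurable h)
    (T : Y → EuclideanSpace ℝ (Fin d)) (hTmeas : Measurable T)
    (A : EuclideanSpace ℝ (Fin d) → ℝ)
    (hA : ∀ η, A η = Real.log (∫ y, h y * Real.exp (∑ i, η i * T y i) ∂μ))
    (hfin : ∀ η : EuclideanSpace ℝ (Fin d),
      Integrable (fun y => h y * Real.exp (∑ i, η i * T y i)) μ ∧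
        0 < ∫ y, h y * Real.exp (∑ i, η i * T y i) ∂μ)
    (hAsmooth : ContDiff ℝ 2 A)
    (lam lam' : ℝ) (hlam : 0 < lam) (hle : lam ≤ lam')
    (hHess : ∀ η v : EuclideanSpace ℝ (Fin d),
      lam * ‖v‖ ^ 2 ≤ iteratedFDeriv ℝ 2 A η ![v, v] ∧
        iteratedFDeriv ℝ 2 A η ![v, v] ≤ lam' * ‖v‖ ^ 2)
    (η₁ η₂ : EuclideanSpace ℝ (Fin d))
    (p₁ p₂ : Y → ℝ)
    (hp₁ : ∀ y, p₁ y = h y * Real.exp ((∑ i, η₁ i * T y i) - A η₁))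
    (hp₂ : ∀ y, p₂ y = h y * Real.exp ((∑ i, η₂ i * T y i) - A η₂)) :
    1 - Real.exp (-(lam / 8) * ‖η₁ - η₂‖ ^ 2) ≤
        1 - ∫ y, Real.sqrt (p₁ y * p₂ y) ∂μ ∧
      1 - ∫ y, Real.sqrt (p₁ y * p₂ y) ∂μ ≤
        1 - Real.exp (-(lam' / 8) * ‖η₁ - η₂‖ ^ 2) :=
  stmt15_general μ d h hh T A hA hfin hAsmooth lam lam' hHess η₁ η₂ p₁ p₂ hp₁ hp₂
end

section
/- Let x > 1 and β > 0 be real numbers, and let B ≥ 1 be a real number satisfying x^B ≤ β·B + 1. Then B ≤ (x/(x−1)) · (e/(e−1)) · ( log(1+β) + log(x/(x−1)) ). -/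
/-!
Taking logarithms, `B · log x ≤ log ((1 + β) B) = log (1 + β) + log B`.
With `a = (x - 1)/x ≤ log x` this reads `B a ≤ log (1 + β) + log B`, and the tangent line of `log` at `e / a` bounds
`log B ≤ log (1/a) + a B / e`. The term linear in `B` is absorbed into the left-hand side at the
cost of the factor `e / (e - 1)`.
-/

open Real

namespace Real

lemma log_le_log_inv_add_mul_div_exp_one {a y : ℝ} (ha : 0 < a) (hy : 0 < y) :
    log y ≤ log a⁻¹ + a * y / exp 1 := by
  have h := log_le_sub_one_of_pos (show 0 < a * y / exp 1 by positivity)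
  rw [log_div (by positivity) (exp_pos 1).ne', log_mul ha.ne' hy.ne', log_exp] at h
  rw [log_inv]
  linarith

lemma le_of_mul_le_add_log {a B K : ℝ} (ha : 0 < a) (hB : 0 < B) (h : B * a ≤ K + log B) :
    B ≤ a⁻¹ * (exp 1 / (exp 1 - 1)) * (K + log a⁻¹) := by
  have he : 0 < exp 1 - 1 := by linarith [add_one_le_exp 1]
  have hlin : B * a * (exp 1 - 1) ≤ exp 1 * (K + log a⁻¹) := by
    have htangent := mul_le_mul_of_nonneg_left (log_le_log_inv_add_mul_div_exp_one ha hB)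
      (exp_pos 1).le
    rw [mul_add, mul_div_cancel₀ _ (exp_pos 1).ne'] at htangent
    linarith [mul_le_mul_of_nonneg_left h (exp_pos 1).le]
  rw [mul_assoc, le_inv_mul_iff₀ ha, div_mul_eq_mul_div, le_div_iff₀ he]
  linarith

end Real

/-- Let `x > 1` and `β > 0` be reals, and let `B ≥ 1` be a real number
satisfying `x^B ≤ β·B + 1`. Then
`B ≤ (x/(x−1)) · (e/(e−1)) · (log(1+β) + log(x/(x−1)))`. -/
theorem stmt16 (x β B : ℝ) (hx : 1 < x) (hβ : 0 < β) (hB : 1 ≤ B)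
    (h : x ^ B ≤ β * B + 1) :
    B ≤ (x / (x - 1)) * (Real.exp 1 / (Real.exp 1 - 1))
      * (Real.log (1 + β) + Real.log (x / (x - 1))) := by
  have hx0 : 0 < x := by linarith
  have hB0 : 0 < B := by linarith
  have hpow : x ^ B ≤ (1 + β) * B := by linarith
  have hlog : B * log x ≤ log (1 + β) + log B := by
    rw [← log_rpow hx0, ← log_mul (by positivity) hB0.ne']
    exact log_le_log (rpow_pos_of_pos hx0 B) hpow
  have ha : (x - 1) / x ≤ log x := by
    simpa [sub_div, div_self hx0.ne'] using one_sub_inv_le_log_of_pos hx0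
  rw [← inv_div]
  exact le_of_mul_le_add_log (by positivity) hB0
    ((mul_le_mul_of_nonneg_left ha hB0.le).trans hlog)
end

section
/- Let d ≥ 1 and K ≥ 1 be integers, let λ > 0 and c > 0 be reals, and let φ₁,…,φ_K ∈ ℝ^d satisfy ‖φ_k‖₂ ≤ 1 for all k. Define V_k = λ·I_d + Σ_{i=1}^{k−1} φ_i φ_iᵀ for k = 1,…,K+1. If φ_kᵀ V_k^{−1} φ_k ≥ c for every k ∈ {1,…,K}, then (1 + c)^{K/d} ≤ 1 + K/(d·λ). -/
/-! The matrix determinant lemma gives `det V_{k+1} = det V_k · (1 + φ_kᵀ V_k⁻¹ φ_k) ≥ (1 + c) det V_k`,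
so `det V_{K+1} ≥ λ^d (1 + c)^K`. On the other hand `trace V_{K+1} ≤ dλ + K`, and AM-GM on the
eigenvalues gives `det V_{K+1} ≤ (trace V_{K+1} / d)^d ≤ (λ + K/d)^d`. Comparing the two bounds and
taking `d`-th roots gives the claim. -/

open Matrix

theorem Real.prod_le_sum_div_card_pow {ι : Type*} [Fintype ι] {z : ι → ℝ} (hz : ∀ i, 0 ≤ z i) :
    ∏ i, z i ≤ ((∑ i, z i) / Fintype.card ι) ^ Fintype.card ι := by
  obtain hι | hι := isEmpty_or_nonempty ι
  · simp
  have hcard : Fintype.card ι ≠ 0 := Fintype.card_ne_zero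
  have hmean : ∏ i, z i ^ (Fintype.card ι : ℝ)⁻¹ ≤ ∑ i, (Fintype.card ι : ℝ)⁻¹ * z i :=
    Real.geom_mean_le_arith_mean_weighted _ _ _ (fun _ _ => by positivity)
      (by simp [hcard]) (fun i _ => hz i)
  calc ∏ i, z i = (∏ i, z i ^ (Fintype.card ι : ℝ)⁻¹) ^ Fintype.card ι := by
        rw [← Finset.prod_pow]
        exact Finset.prod_congr rfl fun i _ => (Real.rpow_inv_natCast_pow (hz i) hcard).symm
    _ ≤ ((∑ i, z i) / Fintype.card ι) ^ Fintype.card ι := by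
        rw [div_eq_inv_mul, Finset.mul_sum]
        gcongr
        exact Finset.prod_nonneg fun i _ => by have := hz i; positivity

namespace Matrix

variable {n : Type*} [Fintype n]

theorem det_add_vecMulVec [DecidableEq n] {R : Type*} [CommRing R] {A : Matrix n n R}
    (hA : IsUnit A.det) (u v : n → R) :
    (A + vecMulVec u v).det = A.det * (1 + v ⬝ᵥ A⁻¹ *ᵥ u) := by
  rw [vecMulVec_eq Unit, det_add_replicateCol_mul_replicateRow hA, Matrix.mul_assoc,
    ← replicateCol_mulVec, det_one_add_mul_comm, det_one_add_replicateCol_mul_replicateRow]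

theorem PosDef.add_vecMulVec_self {A : Matrix n n ℝ} (hA : A.PosDef) (u : n → ℝ) :
    (A + vecMulVec u u).PosDef :=
  hA.add_posSemidef (by simpa using posSemidef_vecMulVec_self_star u)

theorem PosSemidef.det_le_trace_div_card_pow [DecidableEq n] {A : Matrix n n ℝ}
    (hA : A.PosSemidef) : A.det ≤ (A.trace / Fintype.card n) ^ Fintype.card n := by
  rw [hA.isHermitian.det_eq_prod_eigenvalues, hA.isHermitian.trace_eq_sum_eigenvalues]
  exact_mod_cast Real.prod_le_sum_div_card_pow hA.eigenvalues_nonneg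

section RankOneUpdates

variable {V : ℕ → Matrix n n ℝ} {φ : ℕ → n → ℝ}
  (hV : ∀ k, V (k + 1) = V k + vecMulVec (φ k) (φ k))
include hV

theorem posDef_of_add_vecMulVec_self (h0 : (V 0).PosDef) (k : ℕ) : (V k).PosDef := by
  induction k with
  | zero => exact h0
  | succ k ih => exact hV k ▸ ih.add_vecMulVec_self (φ k)

theorem det_mul_one_add_pow_le_det [DecidableEq n] (h0 : (V 0).PosDef) {c : ℝ} (hc : 0 ≤ c)
    {K : ℕ} (hlb : ∀ k < K, c ≤ φ k ⬝ᵥ (V k)⁻¹ *ᵥ φ k) :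
    (V 0).det * (1 + c) ^ K ≤ (V K).det := by
  induction K with
  | zero => simp
  | succ K ih =>
    have hpos := posDef_of_add_vecMulVec_self hV h0 K
    rw [hV K, det_add_vecMulVec ((isUnit_iff_isUnit_det _).mp hpos.isUnit), pow_succ, ← mul_assoc]
    gcongr
    · exact hpos.det_pos.le
    · exact ih fun k hk => hlb k (by omega)
    · exact hlb K K.lt_succ_self

theorem trace_eq_add_sum_dotProduct_self (K : ℕ) :
    (V K).trace = (V 0).trace + ∑ k ∈ Finset.range K, φ k ⬝ᵥ φ k := by
  induction K with
  | zero => simp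
  | succ K ih => rw [hV K, trace_add, trace_vecMulVec, ih, Finset.sum_range_succ, add_assoc]

theorem det_mul_one_add_pow_le_trace_add_div_card_pow [DecidableEq n] (h0 : (V 0).PosDef)
    {c : ℝ} (hc : 0 ≤ c) {K : ℕ} (hnorm : ∀ k < K, φ k ⬝ᵥ φ k ≤ 1)
    (hlb : ∀ k < K, c ≤ φ k ⬝ᵥ (V k)⁻¹ *ᵥ φ k) :
    (V 0).det * (1 + c) ^ K ≤ (((V 0).trace + K) / Fintype.card n) ^ Fintype.card n := by
  have hpos := (posDef_of_add_vecMulVec_self hV h0 K).posSemidef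
  have htrace : (V K).trace ≤ (V 0).trace + K := by
    rw [trace_eq_add_sum_dotProduct_self hV K]
    grw [Finset.sum_le_card_nsmul _ _ 1 fun k hk => hnorm k (Finset.mem_range.mp hk)]
    simp
  calc (V 0).det * (1 + c) ^ K ≤ (V K).det := det_mul_one_add_pow_le_det hV h0 hc hlb
    _ ≤ ((V K).trace / Fintype.card n) ^ Fintype.card n := hpos.det_le_trace_div_card_pow
    _ ≤ (((V 0).trace + K) / Fintype.card n) ^ Fintype.card n := by
        have := hpos.trace_nonneg
        gcongr

end RankOneUpdates

end Matrix

theorem Real.rpow_div_le_of_pow_le_pow {a b : ℝ} (ha : 0 ≤ a) (hb : 0 ≤ b) {K d : ℕ} (hd : d ≠ 0)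
    (h : a ^ K ≤ b ^ d) : a ^ ((K : ℝ) / d) ≤ b := by
  rwa [div_eq_mul_inv, Real.rpow_mul ha, Real.rpow_natCast,
    Real.rpow_inv_le_iff_of_pos (by positivity) hb (by positivity), Real.rpow_natCast]

theorem stmt17_general (d K : ℕ) (hd : 1 ≤ d)
    (lam c : ℝ) (hlam : 0 < lam) (hc : 0 < c)
    (φ : ℕ → Fin d → ℝ)
    (hφ : ∀ k ∈ Finset.Icc 1 K, Real.sqrt (∑ j, (φ k j) ^ 2) ≤ 1)
    (V : ℕ → Matrix (Fin d) (Fin d) ℝ)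
    (hV : ∀ k, V k = lam • (1 : Matrix (Fin d) (Fin d) ℝ)
      + ∑ i ∈ Finset.Icc 1 (k - 1), Matrix.vecMulVec (φ i) (φ i))
    (hlb : ∀ k ∈ Finset.Icc 1 K, c ≤ φ k ⬝ᵥ (V k)⁻¹.mulVec (φ k)) :
    (1 + c) ^ ((K : ℝ) / (d : ℝ)) ≤ 1 + (K : ℝ) / ((d : ℝ) * lam) := by
  have hrec : ∀ m, V (m + 1 + 1) = V (m + 1) + vecMulVec (φ (m + 1)) (φ (m + 1)) := by
    intro m
    rw [hV, hV, Nat.add_sub_cancel, Nat.add_sub_cancel, Finset.sum_Icc_succ_top (by omega),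
      add_assoc]
  have hV1 : V 1 = lam • 1 := by simp [hV 1]
  have hV1pos : (V 1).PosDef := hV1 ▸ (PosDef.one).smul hlam
  have hbound : lam ^ d * (1 + c) ^ K ≤ ((d * lam + K) / d) ^ d := by
    simpa [hV1, mul_comm] using det_mul_one_add_pow_le_trace_add_div_card_pow
      (V := fun m => V (m + 1)) hrec hV1pos hc.le (K := K)
      (fun k hk => by simpa [dotProduct, sq] using hφ (k + 1) (by simp; omega))
      (fun k hk => hlb (k + 1) (by simp; omega))
  have hpow : (1 + c) ^ K ≤ (1 + K / (d * lam)) ^ d := by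
    have hd0 : (d : ℝ) ≠ 0 := by positivity
    refine le_of_mul_le_mul_left (hbound.trans_eq ?_) (pow_pos hlam d)
    rw [← mul_pow]
    field_simp
  exact Real.rpow_div_le_of_pow_le_pow (by positivity) (by positivity) (by omega) hpow

/-- Let `d, K ≥ 1`, `λ > 0`, `c > 0`, and `φ₁,…,φ_K ∈ ℝ^d` with `‖φ_k‖₂ ≤ 1`.
Define `V_k = λ·I_d + ∑_{i=1}^{k−1} φ_i φ_iᵀ`. If `φ_kᵀ V_k⁻¹ φ_k ≥ c` for every
`k ∈ {1,…,K}`, then `(1 + c)^{K/d} ≤ 1 + K/(d·λ)`. -/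
theorem stmt17 (d K : ℕ) (hd : 1 ≤ d) (hK : 1 ≤ K)
    (lam c : ℝ) (hlam : 0 < lam) (hc : 0 < c)
    (φ : ℕ → Fin d → ℝ)
    (hφ : ∀ k ∈ Finset.Icc 1 K, Real.sqrt (∑ j, (φ k j) ^ 2) ≤ 1)
    (V : ℕ → Matrix (Fin d) (Fin d) ℝ)
    (hV : ∀ k, V k = lam • (1 : Matrix (Fin d) (Fin d) ℝ)
      + ∑ i ∈ Finset.Icc 1 (k - 1), Matrix.vecMulVec (φ i) (φ i))
    (hlb : ∀ k ∈ Finset.Icc 1 K, c ≤ φ k ⬝ᵥ (V k)⁻¹.mulVec (φ k)) :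
    (1 + c) ^ ((K : ℝ) / (d : ℝ)) ≤ 1 + (K : ℝ) / ((d : ℝ) * lam) :=
  stmt17_general d K hd lam c hlam hc φ hφ V hV hlb
end

section
/- Let V ∈ ℝ^{d×d} be symmetric positive definite, let φ ∈ ℝ^d, and let b > 0. Then the maximum of trace(φφᵀ X) over all symmetric positive semidefinite matrices X ∈ ℝ^{d×d} with trace(X V) ≤ b equals b · φᵀ V^{−1} φ. -/
/-!
With `u = V⁻¹ φ` and `c = φᵀ V⁻¹ φ = uᵀ V u`, Cauchy–Schwarz for the form `V` gives
`c • V - φ φᵀ ⪰ 0`. Since the trace of a product of positive semidefinite matrices is nonnegative,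
every feasible `X` satisfies `trace (φ φᵀ X) ≤ c · trace (X V) ≤ c b`, and the rank-one matrix
`X = (b / c) • u uᵀ` attains this bound.
-/

open Matrix

namespace Matrix

variable {n : Type*} [Fintype n]

theorem trace_vecMulVec_mul {R : Type*} [CommSemiring R] (a b : n → R) (C : Matrix n n R) :
    (vecMulVec a b * C).trace = b ⬝ᵥ C *ᵥ a := by
  rw [vecMulVec_mul, trace_vecMulVec, dotProduct_comm, ← dotProduct_mulVec]

namespace PosSemidef

variable {M : Matrix n n ℝ}

theorem trace_mul_nonneg {X : Matrix n n ℝ} (hX : X.PosSemidef) (hM : M.PosSemidef) :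
    0 ≤ (X * M).trace := by
  obtain ⟨m, v, rfl⟩ := posSemidef_iff_eq_sum_vecMulVec.mp hX
  rw [Finset.sum_mul, trace_sum]
  refine Finset.sum_nonneg fun i _ => ?_
  simpa only [trace_vecMulVec_mul, star_trivial] using hM.dotProduct_mulVec_nonneg (v i)

theorem dotProduct_mulVec_mul_le (hM : M.PosSemidef) (x y : n → ℝ) :
    (x ⬝ᵥ M *ᵥ y) * (y ⬝ᵥ M *ᵥ x) ≤ (x ⬝ᵥ M *ᵥ x) * (y ⬝ᵥ M *ᵥ y) := by
  classical
  simpa only [toLinearMap₂'_apply'] using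
    LinearMap.BilinForm.apply_mul_apply_le_of_forall_zero_le (toLinearMap₂' ℝ M)
      (fun z => by simpa only [toLinearMap₂'_apply', star_trivial] using
        hM.dotProduct_mulVec_nonneg z) x y

theorem smul_sub_vecMulVec_mulVec (hM : M.PosSemidef) (u : n → ℝ) :
    ((u ⬝ᵥ M *ᵥ u) • M - vecMulVec (M *ᵥ u) (M *ᵥ u)).PosSemidef := by
  refine .of_dotProduct_mulVec_nonneg ?_ fun x => ?_
  · exact (hM.isHermitian.smul (IsSelfAdjoint.all _)).sub
      (by simpa only [star_trivial] using (posSemidef_vecMulVec_self_star (M *ᵥ u)).isHermitian)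
  · have cauchySchwarz := hM.dotProduct_mulVec_mul_le u x
    have hux : (M *ᵥ u) ⬝ᵥ x = u ⬝ᵥ M *ᵥ x := by
      rw [dotProduct_comm, dotProduct_mulVec, ← mulVec_transpose,
        ← conjTranspose_eq_transpose_of_trivial, hM.isHermitian.eq, dotProduct_comm]
    simp only [star_trivial, sub_mulVec, smul_mulVec, vecMulVec_mulVec, dotProduct_sub,
      dotProduct_smul, smul_eq_mul]
    rw [op_smul_eq_mul, hux, sub_nonneg, mul_comm (x ⬝ᵥ _)]
    exact cauchySchwarz

theorem trace_vecMulVec_mulVec_mul_le (hM : M.PosSemidef) {X : Matrix n n ℝ}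
    (hX : X.PosSemidef) (u : n → ℝ) :
    (vecMulVec (M *ᵥ u) (M *ᵥ u) * X).trace ≤ (u ⬝ᵥ M *ᵥ u) * (X * M).trace := by
  have h := hX.trace_mul_nonneg (hM.smul_sub_vecMulVec_mulVec u)
  rwa [mul_sub, trace_sub, Matrix.mul_smul, trace_smul, smul_eq_mul,
    trace_mul_comm X (vecMulVec _ _), sub_nonneg] at h

end PosSemidef

end Matrix

/-- Let `V ∈ ℝ^{d×d}` be symmetric positive definite, `φ ∈ ℝ^d`, `b > 0`.
Then the maximum of `trace(φφᵀ X)` over all symmetric positive semidefinite `X` with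
`trace(X V) ≤ b` equals `b · φᵀ V⁻¹ φ`. -/
theorem stmt19 (d : ℕ) (V : Matrix (Fin d) (Fin d) ℝ) (hV : V.PosDef)
    (φ : Fin d → ℝ) (b : ℝ) (hb : 0 < b) :
    IsGreatest {v : ℝ | ∃ X : Matrix (Fin d) (Fin d) ℝ,
        X.PosSemidef ∧ (X * V).trace ≤ b ∧ v = (Matrix.vecMulVec φ φ * X).trace}
      (b * (φ ⬝ᵥ V⁻¹.mulVec φ)) := by
  set u := V⁻¹ *ᵥ φ
  set c := φ ⬝ᵥ u
  have hVu : V *ᵥ u = φ := by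
    rw [mulVec_mulVec, mul_nonsing_inv V hV.det_pos.ne'.isUnit, one_mulVec]
  have hc : u ⬝ᵥ V *ᵥ u = c := by rw [hVu, dotProduct_comm]
  have hc0 : 0 ≤ c := hc ▸ by simpa using hV.posSemidef.dotProduct_mulVec_nonneg u
  -- if `c = 0` then `b / c = 0` and the witness is `X = 0`, which is still optimal
  refine ⟨⟨(b / c) • vecMulVec u u, ?_, ?_, ?_⟩, ?_⟩
  · simpa using (posSemidef_vecMulVec_self_star u).smul (div_nonneg hb.le hc0)
  · rw [smul_mul_assoc, trace_smul, trace_vecMulVec_mul, hc, smul_eq_mul, div_mul_eq_mul_div,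
      mul_div_assoc]
    exact mul_le_of_le_one_right hb.le (div_self_le_one c)
  · rw [mul_smul_comm, trace_smul, vecMulVec_mul_vecMulVec, trace_vecMulVec, dotProduct_smul,
      smul_eq_mul, smul_eq_mul, div_mul_eq_mul_div, mul_div_assoc, mul_self_div_self]
  · rintro _ ⟨X, hX, hXV, rfl⟩
    calc (vecMulVec φ φ * X).trace ≤ c * (X * V).trace := by
          have h := hV.posSemidef.trace_vecMulVec_mulVec_mul_le hX u
          rwa [hc, hVu] at h
      _ ≤ c * b := mul_le_mul_of_nonneg_left hXV hc0
      _ = b * c := mul_comm c b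
end
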